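/- arXiv:1807.02627 — 11 statements merged into one kernel-verified Lean document; each statement's English description precedes it below -/
import Mathlib

section
/- In a strict ∞-group (an abelian group object in strict ∞-categories), if x and y are composable at level k (i.e. π_k^+(x) = π_k^-(y)), then x #_k y = x + y - π_k^+(x). -/
/-- Street's one-sorted axioms for a strict ∞-category.  `π true` is target (`π⁺`),
`π false` is source (`π⁻`).  The partial composition is modelled by a total function
`comp`, whose value is only constrained on composable pairs. -/
def IsOmegaCat {G : Type*} (π : Bool → ℕ → G → G) (comp : ℕ → G → G → G) : Prop :=
  (∀ x, ∃ n, π true n x = x ∧ π false n x = x) ∧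
  (∀ (ε δ : Bool) (n m : ℕ) (x : G),
      π ε n (π δ m x) = if n < m then π ε n x else π δ m x) ∧
  (∀ (n : ℕ) (x : G), comp n (π false n x) x = x ∧ comp n x (π true n x) = x) ∧
  (∀ (n : ℕ) (x y : G), π true n x = π false n y →
      π false n (comp n x y) = π false n x ∧
      π true n (comp n x y) = π true n y ∧
      ∀ (k : ℕ), n < k → ∀ ε, π ε k (comp n x y) = comp n (π ε k x) (π ε k y)) ∧
  (∀ (n : ℕ) (x y z : G), π true n x = π false n y → π true n y = π false n z →
      comp n x (comp n y z) = comp n (comp n x y) z) ∧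
  (∀ (k n : ℕ) (x y z w : G), k < n →
      π true n x = π false n y → π true n z = π false n w →
      π true k (comp n x y) = π false k (comp n z w) →
      comp k (comp n x y) (comp n z w) = comp n (comp k x z) (comp k y w))

/-- In a strict ∞-group (an abelian group object in strict ∞-categories), composition
is given by `x #_k y = x + y - π⁺_k x` whenever `π⁺_k x = π⁻_k y`. -/
theorem inf_group_comp_formula
    {G : Type*} [AddCommGroup G] (π : Bool → ℕ → G → G) (comp : ℕ → G → G → G)
    (hcat : IsOmegaCat π comp)
    (hπadd : ∀ (ε : Bool) (n : ℕ) (x y : G), π ε n (x + y) = π ε n x + π ε n y)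
    (hcompadd : ∀ (k : ℕ) (x y z w : G),
      π true k x = π false k y → π true k z = π false k w →
      comp k x y + comp k z w = comp k (x + z) (y + w)) :
    ∀ (k : ℕ) (x y : G), π true k x = π false k y →
      comp k x y = x + y - π true k x := by
  obtain ⟨-, hππ, hid, -⟩ := hcat
  intro k x y h
  set e := π true k x with he
  have he1 : π true k e = e := by simpa using hππ true true k k x
  have he2 : π false k e = e := by simpa using hππ false true k k x
  have hunit : comp k e e = e := by
    have := (hid k e).1
    rwa [he2] at this
  have hx : comp k x e = x := (hid k x).2
  have hy : comp k e y = y := by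
    have := (hid k y).1
    rwa [← h] at this
  have h1 : comp k x y + e = comp k (x + e) (y + e) := by
    conv_lhs => rw [← hunit]
    exact hcompadd k x y e e h (he1.trans he2.symm)
  have h2 : x + y = comp k (x + e) (e + y) := by
    conv_lhs => rw [← hx, ← hy]
    exact hcompadd k x e e y (he.symm.trans he2.symm) (he1.trans h)
  have key : comp k x y + e = x + y := by
    rw [h1, h2, add_comm e y]
  exact eq_sub_of_add_eq key
end

section
/- Let G be a globular group, G_n the image of π_n^+ (the subgroup of n-arrows), and for a sequence of signs (ε_0, ε_1, ..., ε_n), let PG_k^{ε_k} = {v ∈ G_k : π_{k-1}^{ε_k}(v) = 0} (with PG_0 = G_0). Then G_n decomposes as an internal direct sum G_n = PG_n^{ε_n} ⊕ PG_{n-1}^{ε_{n-1}} ⊕ ... ⊕ PG_0^{ε_0}, for any choice of signs ε_i. -/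
/-- In a globular group `G` (with the convention `π_k^ε = 0` for `k < 0`), the subgroup
`G_n` of `n`-arrows decomposes as an internal direct sum
`G_n = PG_n^{ε_n} ⊕ PG_{n-1}^{ε_{n-1}} ⊕ ⋯ ⊕ PG_0^{ε_0}` for any choice of signs,
where `PG_k^ε = {v ∈ G_k : π_{k-1}^ε v = 0}`.  Signs are booleans: `true = +`,
`false = -`. -/
theorem globular_group_direct_sum
    {G : Type*} [AddCommGroup G] (π : Bool → ℤ → G →+ G)
    (hneg : ∀ (ε : Bool) (k : ℤ), k < 0 → π ε k = 0)
    (hglob_lt : ∀ (ε δ : Bool) (i j : ℤ), i < j → ∀ x, π ε i (π δ j x) = π ε i x)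
    (hglob_le : ∀ (ε δ : Bool) (i j : ℤ), j ≤ i → ∀ x, π ε i (π δ j x) = π δ j x)
    (harrow : ∀ x : G, ∃ n : ℤ, π true n x = x)
    (n : ℕ) (ε : ℕ → Bool) (x : G) (hx : π true (n : ℤ) x = x) :
    ∃! f : Fin (n + 1) → G,
      (∀ k : Fin (n + 1),
          π true ((k : ℕ) : ℤ) (f k) = f k ∧ π (ε k) (((k : ℕ) : ℤ) - 1) (f k) = 0) ∧
      x = ∑ k, f k := by
  set h : ℕ → G := fun m => π (ε m) ((m : ℤ) - 1) x with hh
  have htop : h (n + 1) = x := by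
    simp only [hh]
    have := hglob_le (ε (n + 1)) true (((n + 1 : ℕ) : ℤ) - 1) (n : ℤ)
      (by push_cast; omega) x
    rw [hx] at this
    exact this
  have hzero : h 0 = 0 := by
    simp only [hh]
    rw [show ((0 : ℕ) : ℤ) - 1 = (-1 : ℤ) by norm_num, hneg _ _ (by norm_num)]
    rfl
  refine ⟨fun k => h ((k : ℕ) + 1) - h (k : ℕ), ⟨?_, ?_⟩, ?_⟩
  · intro k
    constructor
    · simp only [hh, map_sub]
      rw [hglob_le true (ε ((k : ℕ) + 1)) ((k : ℕ) : ℤ) ((((k : ℕ) + 1 : ℕ) : ℤ) - 1)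
          (by push_cast; omega) x,
        hglob_le true (ε (k : ℕ)) ((k : ℕ) : ℤ) (((k : ℕ) : ℤ) - 1) (by omega) x]
    · simp only [hh, map_sub]
      rw [hglob_lt (ε (k : ℕ)) (ε ((k : ℕ) + 1)) (((k : ℕ) : ℤ) - 1)
          ((((k : ℕ) + 1 : ℕ) : ℤ) - 1) (by push_cast; omega) x,
        hglob_le (ε (k : ℕ)) (ε (k : ℕ)) (((k : ℕ) : ℤ) - 1) (((k : ℕ) : ℤ) - 1) le_rfl x,
        sub_self]
  · rw [Fin.sum_univ_eq_sum_range (fun i => h (i + 1) - h i) (n + 1),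
      Finset.sum_range_sub h, hzero, htop, sub_zero]
  · intro f hf
    have hterm : ∀ (m : ℕ) (j : Fin (n + 1)),
        π (ε m) ((m : ℤ) - 1) (f j) = if (j : ℕ) < m then f j else 0 := by
      intro m j
      rcases lt_trichotomy (j : ℕ) m with hlt | heq | hgt
      · rw [if_pos hlt]
        have := hglob_le (ε m) true ((m : ℤ) - 1) ((j : ℕ) : ℤ) (by omega) (f j)
        rw [(hf.1 j).1] at this
        exact this
      · rw [if_neg (by omega), ← heq]
        exact (hf.1 j).2
      · rw [if_neg (by omega)]
        have := hglob_lt (ε m) (ε (j : ℕ)) ((m : ℤ) - 1) (((j : ℕ) : ℤ) - 1)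
          (by omega) (f j)
        rw [(hf.1 j).2, map_zero] at this
        exact this.symm
    have key : ∀ m : ℕ, h m =
        ∑ j ∈ Finset.univ.filter (fun j : Fin (n + 1) => (j : ℕ) < m), f j := by
      intro m
      simp only [hh]
      rw [hf.2, map_sum, Finset.sum_filter]
      exact Finset.sum_congr rfl fun j _ => hterm m j
    funext k
    have hsplit : Finset.univ.filter (fun j : Fin (n + 1) => (j : ℕ) < (k : ℕ) + 1)
        = insert k (Finset.univ.filter fun j : Fin (n + 1) => (j : ℕ) < (k : ℕ)) := by
      ext j
      simp [Fin.ext_iff]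
      omega
    have hknot : k ∉ Finset.univ.filter fun j : Fin (n + 1) => (j : ℕ) < (k : ℕ) := by
      simp
    have e1 := key ((k : ℕ) + 1)
    rw [hsplit, Finset.sum_insert hknot, ← key (k : ℕ)] at e1
    rw [e1]
    abel
end

section
/- Let G be a globular group and K_n = PG_n = G_n/G_{n-1} with differential ∂: K_n → K_{n-1} induced by x ↦ π_{n-1}^+(x) - π_{n-1}^-(x). Then ∂ is well-defined (vanishes on G_{n-1}) and satisfies ∂ ∘ ∂ = 0, so (K_•, ∂) is a chain complex. -/
/-- The subgroup `G_n` of `n`-arrows of a globular group, i.e. the range of `π_n^+`. -/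
abbrev GlobGn {G : Type*} [AddCommGroup G] (π : Bool → ℤ → G →+ G) (n : ℤ) :
    AddSubgroup G :=
  (π true n).range

/-- `K_n = PG_n = G_n / G_{n-1}`. -/
abbrev GlobKq {G : Type*} [AddCommGroup G] (π : Bool → ℤ → G →+ G) (n : ℤ) :=
  GlobGn π n ⧸ (GlobGn π (n - 1)).addSubgroupOf (GlobGn π n)

section GlobAux

variable {G : Type*} [AddCommGroup G] (π : Bool → ℤ → G →+ G)
  (hle : ∀ (ε δ : Bool) (i j : ℤ), j ≤ i → ∀ x, π ε i (π δ j x) = π δ j x)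

/-- The boundary representative `G_n → G_{n-1}`. -/
def globDiffHom (n : ℤ) : GlobGn π n →+ GlobGn π (n - 1) where
  toFun x := ⟨π true (n - 1) (x : G) - π false (n - 1) (x : G),
    ⟨π true (n - 1) (x : G) - π false (n - 1) (x : G), by
      rw [map_sub, hle true true (n-1) (n-1) le_rfl, hle true false (n-1) (n-1) le_rfl]⟩⟩
  map_zero' := by ext; simp
  map_add' a b := by ext; push_cast [map_add]; abel

/-- The induced differential on the quotients. -/
def globD (n : ℤ) : GlobKq π n →+ GlobKq π (n - 1) :=
  QuotientAddGroup.lift _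
    ((QuotientAddGroup.mk' _).comp (globDiffHom π hle n)) (by
      intro x hx
      obtain ⟨y, hy0⟩ := hx
      have hy : π true (n - 1) y = (x : G) := hy0
      have h1 : π true (n - 1) (x : G) = (x : G) := by
        rw [← hy, hle true true (n-1) (n-1) le_rfl]
      have h2 : π false (n - 1) (x : G) = (x : G) := by
        rw [← hy, hle false true (n-1) (n-1) le_rfl]
      have : globDiffHom π hle n x = 0 := by
        ext; simp [globDiffHom, h1, h2]
      simp [this])

theorem globD_mk (n : ℤ) (x : GlobGn π n) :
    globD π hle n (QuotientAddGroup.mk x) =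
      QuotientAddGroup.mk (globDiffHom π hle n x) := rfl

end GlobAux

/-- For a globular group `G`, the map `x ↦ π_{n-1}^+(x) - π_{n-1}^-(x)` vanishes on
`G_{n-1}`, hence induces a well-defined differential `∂ : K_n → K_{n-1}` on
`K_n = G_n/G_{n-1}`, and `∂ ∘ ∂ = 0`: `(K_•, ∂)` is a chain complex. -/
theorem globular_group_chain_complex
    {G : Type*} [AddCommGroup G] (π : Bool → ℤ → G →+ G)
    (hneg : ∀ (ε : Bool) (k : ℤ), k < 0 → π ε k = 0)
    (hglob_lt : ∀ (ε δ : Bool) (i j : ℤ), i < j → ∀ x, π ε i (π δ j x) = π ε i x)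
    (hglob_le : ∀ (ε δ : Bool) (i j : ℤ), j ≤ i → ∀ x, π ε i (π δ j x) = π δ j x)
    (harrow : ∀ x : G, ∃ n : ℤ, π true n x = x) :
    -- the representative of ∂ vanishes on G_{n-1}
    (∀ (n : ℤ) (x : G), π true (n - 1) x = x →
        π true (n - 1) x - π false (n - 1) x = 0) ∧
    -- the induced differential on the quotients exists and squares to zero
    ∃ d : ∀ n : ℤ, GlobKq π n →+ GlobKq π (n - 1),
      (∀ (n : ℤ) (x : GlobGn π n) (y : GlobGn π (n - 1)),
          (y : G) = π true (n - 1) (x : G) - π false (n - 1) (x : G) →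
          d n (QuotientAddGroup.mk x) = QuotientAddGroup.mk y) ∧
      (∀ (n : ℤ) (q : GlobKq π n), d (n - 1) (d n q) = 0) := by
  refine ⟨?_, globD π hglob_le, ?_, ?_⟩
  · intro n x hx
    have h : π false (n - 1) x = x := by
      conv_lhs => rw [← hx, hglob_le false true (n-1) (n-1) le_rfl]
      exact hx
    rw [hx, h, sub_self]
  · intro n x y hy
    rw [globD_mk]
    congr 1
    ext
    simp [globDiffHom, hy]
  · intro n q
    induction q using QuotientAddGroup.induction_on with
    | H x =>
      rw [globD_mk, globD_mk]
      have hz : globDiffHom π hglob_le (n - 1) (globDiffHom π hglob_le n x) = 0 := by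
        ext
        have h1 : (n - 1 - 1 : ℤ) < n - 1 := by omega
        simp only [globDiffHom, AddMonoidHom.coe_mk, ZeroHom.coe_mk, map_sub,
          hglob_lt true true (n-1-1) (n-1) h1, hglob_lt true false (n-1-1) (n-1) h1,
          hglob_lt false true (n-1-1) (n-1) h1, hglob_lt false false (n-1-1) (n-1) h1]
        simp
      rw [hz, QuotientAddGroup.mk_zero]
end

section
/- Given two globular groups G and H, define operations on the tensor product of abelian groups G ⊗ H by π_n^ε(g ⊗ h) = Σ_i (π_i^ε - π_{i-1}^ε)(g) ⊗ π_{n-i}^{(-1)^i ε}(h). Then these operations satisfy the globular relations, making G ⊗ H a globular group. -/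
/-! Write `D_k^ε = π_k^ε - π_{k-1}^ε`. The globular relations give `D_l^ε D_k^δ = 0` unless
`l ∈ {k-1, k}`, so the double sum for `π_i^ε π_j^δ (g ⊗ h)` has two terms for each `k`.
For `j ≤ i` both `H`-factors reduce to `π_{j-k}^{(-1)^k δ} h` and the two `G`-factors add up to
`D_k^δ g`. For `i < j` the `H`-factors reduce to those occurring in `π_i^ε (g ⊗ h)`, and what is
left over is a telescoping sum. Finally `g ⊗ h` is fixed by `π_n^+` as soon as `n` is large
enough for `g` and `h` to be fixed, because the layers `D_k^+ g` sum to `g`. -/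

open scoped TensorProduct

/-- The sign `(-1)^i ε`: `ε` if `i` is even, the opposite sign if `i` is odd. -/
def sflip (i : ℤ) (ε : Bool) : Bool := if Even i then ε else !ε

open Finset TensorProduct

lemma sflip_sub_one_not (k : ℤ) (δ : Bool) : sflip (k - 1) (!δ) = sflip k δ := by
  by_cases h : Even k <;> simp [sflip, h]

lemma sum_Icc_sub_pred {M : Type*} [AddCommGroup M] (f : ℤ → M) {a n : ℤ} (hn : a - 1 ≤ n) :
    ∑ k ∈ Icc a n, (f k - f (k - 1)) = f n - f (a - 1) := by
  induction n, hn using Int.leInduction with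
  | base => simp
  | succ n hn ih =>
    rw [show Icc a (n + 1) = insert (n + 1) (Icc a n) by ext; simp; omega,
      sum_insert (by simp), ih, add_sub_cancel_right]
    abel

lemma TensorProduct.addMonoidHom_ext {G H M : Type*} [AddCommGroup G] [AddCommGroup H]
    [AddCommGroup M] {f g : G ⊗[ℤ] H →+ M} (h : ∀ x y, f (x ⊗ₜ[ℤ] y) = g (x ⊗ₜ[ℤ] y)) : f = g :=
  AddMonoidHom.toIntLinearMap_injective (TensorProduct.ext' h)

structure GlobularRelations {A : Type*} [AddCommGroup A] (π : Bool → ℤ → A →+ A) : Prop where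
  comp_of_lt : ∀ (ε δ : Bool) (i j : ℤ), i < j → ∀ x, π ε i (π δ j x) = π ε i x
  comp_of_le : ∀ (ε δ : Bool) (i j : ℤ), j ≤ i → ∀ x, π ε i (π δ j x) = π δ j x
  eq_zero_of_neg : ∀ (ε : Bool) (k : ℤ), k < 0 → π ε k = 0

structure IsGlobular {A : Type*} [AddCommGroup A] (π : Bool → ℤ → A →+ A) : Prop
    extends GlobularRelations π where
  exists_fixed : ∀ x, ∃ n, π true n x = x

def layer {A : Type*} [AddCommGroup A] (π : Bool → ℤ → A →+ A) (ε : Bool) (k : ℤ) : A →+ A :=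
  π ε k - π ε (k - 1)

@[simp] lemma layer_apply {A : Type*} [AddCommGroup A] (π : Bool → ℤ → A →+ A) (ε : Bool) (k : ℤ)
    (x : A) : layer π ε k x = π ε k x - π ε (k - 1) x :=
  rfl

namespace GlobularRelations

variable {A : Type*} [AddCommGroup A] {π : Bool → ℤ → A →+ A}

lemma apply_eq_self_of_le (hπ : GlobularRelations π) (ε : Bool) {δ : Bool} {n m : ℤ} (hnm : n ≤ m)
    {x : A} (hx : π δ n x = x) : π ε m x = x := by
  rw [← hx, hπ.comp_of_le ε δ m n hnm]

variable (hπ : GlobularRelations π)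
include hπ

lemma layer_layer_eq_zero (ε δ : Bool) {k l : ℤ} (hl₁ : l ≠ k - 1) (hl₂ : l ≠ k) (x : A) :
    layer π ε l (layer π δ k x) = 0 := by
  simp only [layer_apply, map_sub]
  rcases (by omega : l < k - 1 ∨ k < l) with h | h
  · rw [hπ.comp_of_lt ε δ l k (by omega), hπ.comp_of_lt ε δ l (k - 1) h,
      hπ.comp_of_lt ε δ (l - 1) k (by omega), hπ.comp_of_lt ε δ (l - 1) (k - 1) (by omega)]
    abel
  · rw [hπ.comp_of_le ε δ l k h.le, hπ.comp_of_le ε δ l (k - 1) (by omega),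
      hπ.comp_of_le ε δ (l - 1) k (by omega), hπ.comp_of_le ε δ (l - 1) (k - 1) (by omega)]
    abel

lemma layer_sub_one_layer (ε δ : Bool) (k : ℤ) (x : A) :
    layer π ε (k - 1) (layer π δ k x) = π ε (k - 1) x - π δ (k - 1) x := by
  simp only [layer_apply, map_sub]
  rw [hπ.comp_of_lt ε δ (k - 1) k (by omega), hπ.comp_of_le ε δ (k - 1) (k - 1) le_rfl,
    hπ.comp_of_lt ε δ (k - 1 - 1) k (by omega), hπ.comp_of_lt ε δ (k - 1 - 1) (k - 1) (by omega)]
  abel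

lemma layer_layer_self (ε δ : Bool) (k : ℤ) (x : A) :
    layer π ε k (layer π δ k x) = π δ k x - π ε (k - 1) x := by
  simp only [layer_apply, map_sub]
  rw [hπ.comp_of_le ε δ k k le_rfl, hπ.comp_of_le ε δ k (k - 1) (by omega),
    hπ.comp_of_lt ε δ (k - 1) k (by omega), hπ.comp_of_le ε δ (k - 1) (k - 1) le_rfl]
  abel

lemma sum_layer (ε : Bool) {n : ℤ} (hn : -1 ≤ n) (x : A) :
    ∑ k ∈ Icc 0 n, layer π ε k x = π ε n x := by
  simp only [layer_apply]
  rw [sum_Icc_sub_pred (fun k => π ε k x) hn, zero_sub, hπ.eq_zero_of_neg ε (-1) (by norm_num)]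
  simp

end GlobularRelations

def IsGlobularTensor {G H : Type*} [AddCommGroup G] [AddCommGroup H] (π : Bool → ℤ → G →+ G)
    (ρ : Bool → ℤ → H →+ H) (T : Bool → ℤ → G ⊗[ℤ] H →+ G ⊗[ℤ] H) : Prop :=
  ∀ ε n g h, T ε n (g ⊗ₜ[ℤ] h) = ∑ᶠ i, layer π ε i g ⊗ₜ[ℤ] ρ (sflip i ε) (n - i) h

namespace IsGlobularTensor

variable {G H : Type*} [AddCommGroup G] [AddCommGroup H] {π : Bool → ℤ → G →+ G}
  {ρ : Bool → ℤ → H →+ H} {T : Bool → ℤ → G ⊗[ℤ] H →+ G ⊗[ℤ] H}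

lemma apply_tmul_eq_sum (hT : IsGlobularTensor π ρ T) (hπ : GlobularRelations π)
    (hρ : GlobularRelations ρ) (ε : Bool) {n : ℤ} {s : Finset ℤ} (hs : Icc 0 n ⊆ s)
    (g : G) (h : H) :
    T ε n (g ⊗ₜ[ℤ] h) = ∑ i ∈ s, layer π ε i g ⊗ₜ[ℤ] ρ (sflip i ε) (n - i) h := by
  refine (hT ε n g h).trans (finsum_eq_sum_of_support_subset _ fun i hi => hs ?_)
  by_contra hi'
  rw [mem_Icc, not_and_or, not_le, not_le] at hi'
  rcases hi' with hi' | hi'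
  · simp [hπ.eq_zero_of_neg ε i hi', hπ.eq_zero_of_neg ε (i - 1) (by omega)] at hi
  · simp [hρ.eq_zero_of_neg _ (n - i) (by omega)] at hi

lemma apply_layer_tmul (hT : IsGlobularTensor π ρ T) (hπ : GlobularRelations π) (ε δ : Bool)
    (i k : ℤ) (g : G) (y : H) :
    T ε i (layer π δ k g ⊗ₜ[ℤ] y) =
      (π ε (k - 1) g - π δ (k - 1) g) ⊗ₜ[ℤ] ρ (sflip (k - 1) ε) (i - (k - 1)) y +
        (π δ k g - π ε (k - 1) g) ⊗ₜ[ℤ] ρ (sflip k ε) (i - k) y := by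
  have hsupp : Function.support (fun l =>
      layer π ε l (layer π δ k g) ⊗ₜ[ℤ] ρ (sflip l ε) (i - l) y) ⊆ ↑({k - 1, k} : Finset ℤ) := by
    intro l hl
    by_contra hl'
    simp only [coe_insert, coe_singleton, Set.mem_insert_iff, Set.mem_singleton_iff, not_or] at hl'
    rw [Function.mem_support, hπ.layer_layer_eq_zero ε δ hl'.1 hl'.2, zero_tmul] at hl
    exact hl rfl
  rw [hT, finsum_eq_sum_of_support_subset _ hsupp, sum_pair (by omega),
    hπ.layer_sub_one_layer, hπ.layer_layer_self]

/-- For `a = b` and distinct signs, `ρ_a ρ_b` need not be `ρ_a`; but then either `ε = δ` and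
the left factor vanishes, or `ε = !δ` and the two signs agree. -/
lemma tmul_proj_proj_of_le (hρ : GlobularRelations ρ) (ε δ : Bool) (k : ℤ) {a b : ℤ} (hab : a ≤ b)
    (x : G) (y : H) :
    (π ε (k - 1) x - π δ (k - 1) x) ⊗ₜ[ℤ] ρ (sflip (k - 1) ε) a (ρ (sflip k δ) b y) =
      (π ε (k - 1) x - π δ (k - 1) x) ⊗ₜ[ℤ] ρ (sflip (k - 1) ε) a y := by
  rcases hab.lt_or_eq with hab | rfl
  · rw [hρ.comp_of_lt _ _ _ _ hab]
  rcases Bool.eq_or_eq_not ε δ with rfl | rfl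
  · simp
  · rw [sflip_sub_one_not, hρ.comp_of_le _ _ _ _ le_rfl]

lemma eq_zero_of_neg (hT : IsGlobularTensor π ρ T) (hπ : GlobularRelations π)
    (hρ : GlobularRelations ρ) (ε : Bool) {k : ℤ} (hk : k < 0) : T ε k = 0 :=
  addMonoidHom_ext fun g h => by
    rw [hT.apply_tmul_eq_sum hπ hρ ε (s := ∅) (by simp [hk]), sum_empty, AddMonoidHom.zero_apply]

lemma comp_of_le (hT : IsGlobularTensor π ρ T) (hπ : GlobularRelations π)
    (hρ : GlobularRelations ρ) (ε δ : Bool) {i j : ℤ} (hji : j ≤ i) :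
    (T ε i).comp (T δ j) = T δ j := by
  refine addMonoidHom_ext fun g h => ?_
  rw [AddMonoidHom.comp_apply, hT.apply_tmul_eq_sum hπ hρ δ subset_rfl, map_sum]
  refine sum_congr rfl fun k _ => ?_
  rw [hT.apply_layer_tmul hπ, hρ.comp_of_le _ _ _ _ (by omega), hρ.comp_of_le _ _ _ _ (by omega),
    ← add_tmul, layer_apply]
  congr 1
  abel

lemma comp_of_lt (hT : IsGlobularTensor π ρ T) (hπ : GlobularRelations π)
    (hρ : GlobularRelations ρ) (ε δ : Bool) {i j : ℤ} (hij : i < j) :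
    (T ε i).comp (T δ j) = T ε i := by
  rcases lt_or_ge i 0 with hi | hi
  · rw [hT.eq_zero_of_neg hπ hρ ε hi, AddMonoidHom.zero_comp]
  refine addMonoidHom_ext fun g h => ?_
  set c : ℤ → G ⊗[ℤ] H := fun m => (π ε m g - π δ m g) ⊗ₜ[ℤ] ρ (sflip m ε) (i - m) h
  have hterm : ∀ k, T ε i (layer π δ k g ⊗ₜ[ℤ] ρ (sflip k δ) (j - k) h) =
      layer π ε k g ⊗ₜ[ℤ] ρ (sflip k ε) (i - k) h - (c k - c (k - 1)) := by
    intro k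
    rw [hT.apply_layer_tmul hπ, hρ.comp_of_lt _ _ (i - k) (j - k) (by omega),
      tmul_proj_proj_of_le hρ ε δ k (by omega)]
    simp only [c, layer_apply, sub_tmul]
    abel
  rw [AddMonoidHom.comp_apply, hT.apply_tmul_eq_sum hπ hρ δ subset_rfl, map_sum,
    sum_congr rfl fun k _ => hterm k, sum_sub_distrib, sum_Icc_sub_pred c (by omega),
    ← hT.apply_tmul_eq_sum hπ hρ ε (Icc_subset_Icc le_rfl hij.le)]
  simp [c, hρ.eq_zero_of_neg _ (i - j) (by omega), hπ.eq_zero_of_neg _ (-1)]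

lemma globularRelations (hT : IsGlobularTensor π ρ T) (hπ : GlobularRelations π)
    (hρ : GlobularRelations ρ) : GlobularRelations T where
  comp_of_lt ε δ _ _ hij := DFunLike.congr_fun (hT.comp_of_lt hπ hρ ε δ hij)
  comp_of_le ε δ _ _ hji := DFunLike.congr_fun (hT.comp_of_le hπ hρ ε δ hji)
  eq_zero_of_neg ε _ hk := hT.eq_zero_of_neg hπ hρ ε hk

lemma exists_apply_tmul_eq_self (hT : IsGlobularTensor π ρ T) (hπ : IsGlobular π)
    (hρ : IsGlobular ρ) (g : G) (h : H) : ∃ n, T true n (g ⊗ₜ[ℤ] h) = g ⊗ₜ[ℤ] h := by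
  obtain ⟨m, hm⟩ := hπ.exists_fixed g
  obtain ⟨p, hp⟩ := hρ.exists_fixed h
  set n := max m 0 + max p 0
  have hterm : ∀ i ∈ Icc 0 n,
      layer π true i g ⊗ₜ[ℤ] ρ (sflip i true) (n - i) h = layer π true i g ⊗ₜ[ℤ] h := by
    intro i _
    rcases le_or_gt i m with hi | hi
    · rw [hρ.apply_eq_self_of_le _ (by omega) hp]
    · rw [layer_apply, hπ.apply_eq_self_of_le _ hi.le hm,
        hπ.apply_eq_self_of_le _ (by omega) hm, sub_self, zero_tmul, zero_tmul]
  refine ⟨n, ?_⟩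
  rw [hT.apply_tmul_eq_sum hπ.toGlobularRelations hρ.toGlobularRelations true subset_rfl,
    sum_congr rfl hterm, ← sum_tmul, hπ.sum_layer _ (by omega),
    hπ.apply_eq_self_of_le _ (by omega) hm]

lemma isGlobular (hT : IsGlobularTensor π ρ T) (hπ : IsGlobular π) (hρ : IsGlobular ρ) :
    IsGlobular T :=
  have hTrel := hT.globularRelations hπ.toGlobularRelations hρ.toGlobularRelations
  { hTrel with
    exists_fixed := fun t => by
      induction t using TensorProduct.induction_on with
      | zero => exact ⟨0, map_zero _⟩
      | tmul g h => exact hT.exists_apply_tmul_eq_self hπ hρ g h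
      | add a b ha hb =>
        obtain ⟨n₁, h₁⟩ := ha
        obtain ⟨n₂, h₂⟩ := hb
        refine ⟨max n₁ n₂, ?_⟩
        rw [map_add, hTrel.apply_eq_self_of_le _ (le_max_left _ _) h₁,
          hTrel.apply_eq_self_of_le _ (le_max_right _ _) h₂] }

end IsGlobularTensor

/-- Given globular groups `G` and `H`, the operations on `G ⊗ H` defined on elementary
tensors by `π_n^ε (g ⊗ h) = Σ_i (π_i^ε - π_{i-1}^ε)(g) ⊗ π_{n-i}^{(-1)^i ε}(h)`
satisfy the globular relations, making `G ⊗ H` a globular group. -/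
theorem tensor_of_globular_groups_is_globular
    {G H : Type*} [AddCommGroup G] [AddCommGroup H]
    (π : Bool → ℤ → G →+ G) (ρ : Bool → ℤ → H →+ H)
    (hπneg : ∀ (ε : Bool) (k : ℤ), k < 0 → π ε k = 0)
    (hρneg : ∀ (ε : Bool) (k : ℤ), k < 0 → ρ ε k = 0)
    (hπlt : ∀ (ε δ : Bool) (i j : ℤ), i < j → ∀ x, π ε i (π δ j x) = π ε i x)
    (hπle : ∀ (ε δ : Bool) (i j : ℤ), j ≤ i → ∀ x, π ε i (π δ j x) = π δ j x)
    (hρlt : ∀ (ε δ : Bool) (i j : ℤ), i < j → ∀ y, ρ ε i (ρ δ j y) = ρ ε i y)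
    (hρle : ∀ (ε δ : Bool) (i j : ℤ), j ≤ i → ∀ y, ρ ε i (ρ δ j y) = ρ δ j y)
    (hπar : ∀ x : G, ∃ n : ℤ, π true n x = x)
    (hρar : ∀ y : H, ∃ n : ℤ, ρ true n y = y)
    (πT : Bool → ℤ → G ⊗[ℤ] H → G ⊗[ℤ] H)
    (hTadd : ∀ (ε : Bool) (n : ℤ) (a b : G ⊗[ℤ] H),
      πT ε n (a + b) = πT ε n a + πT ε n b)
    (hTdef : ∀ (ε : Bool) (n : ℤ) (g : G) (h : H),
      πT ε n (g ⊗ₜ[ℤ] h) =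
        ∑ᶠ i : ℤ, (π ε i g - π ε (i - 1) g) ⊗ₜ[ℤ] ρ (sflip i ε) (n - i) h) :
    (∀ (ε δ : Bool) (i j : ℤ), i < j → ∀ t, πT ε i (πT δ j t) = πT ε i t) ∧
    (∀ (ε δ : Bool) (i j : ℤ), j ≤ i → ∀ t, πT ε i (πT δ j t) = πT δ j t) ∧
    (∀ (ε : Bool) (k : ℤ), k < 0 → ∀ t, πT ε k t = 0) ∧
    (∀ t : G ⊗[ℤ] H, ∃ n : ℤ, πT true n t = t) := by
  let T : Bool → ℤ → G ⊗[ℤ] H →+ G ⊗[ℤ] H := fun ε n => AddMonoidHom.mk' (πT ε n) (hTadd ε n)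
  have hT : IsGlobularTensor π ρ T := hTdef
  obtain ⟨⟨hlt, hle, hneg⟩, hfix⟩ :=
    hT.isGlobular ⟨⟨hπlt, hπle, hπneg⟩, hπar⟩ ⟨⟨hρlt, hρle, hρneg⟩, hρar⟩
  exact ⟨hlt, hle, fun ε k hk => DFunLike.congr_fun (hneg ε k hk), hfix⟩
end

section
/- In the tensor product of two globular groups G and H, the two formulas π_n^ε(g ⊗ h) = Σ_i (π_i^ε - π_{i-1}^ε)(g) ⊗ π_{n-i}^{(-1)^i ε}(h) and π_n^ε(g ⊗ h) = Σ_i π_i^ε(g) ⊗ (π_{n-i}^{(-1)^i ε} - π_{n-i-1}^{-(-1)^i ε})(h) agree. -/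
/-!
Summation by parts: with `A i = π_i^ε g` and `B i = π_{n-i}^{(-1)^i ε} h`, the second formula
is `Σ A i ⊗ (B i - B (i+1))`, since `(-1)^{i+1} ε = -(-1)^i ε`. Both sums differ from
`Σ A i ⊗ B i` by `Σ A (i-1) ⊗ B i = Σ A i ⊗ B (i+1)`, and only finitely many terms are nonzero
because `A i = 0` for `i < 0` and `B i = 0` for `i > n`.
-/

open scoped TensorProduct

theorem sflip_add_one (i : ℤ) (ε : Bool) : sflip (i + 1) ε = !sflip i ε := by
  by_cases he : Even i <;> simp [sflip, he]

theorem finite_support_of_eq_zero_outside_Icc {P : Type*} [Zero P] {u : ℤ → P} (a b : ℤ)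
    (hlo : ∀ i < a, u i = 0) (hhi : ∀ i, b < i → u i = 0) : u.support.Finite :=
  (Set.finite_Icc a b).subset fun i hi =>
    ⟨not_lt.1 fun h => hi (hlo i h), not_lt.1 fun h => hi (hhi i h)⟩

theorem finsum_bilin_by_parts {R M N P : Type*} [CommSemiring R] [AddCommGroup M]
    [AddCommGroup N] [AddCommGroup P] [Module R M] [Module R N] [Module R P]
    (f : M →ₗ[R] N →ₗ[R] P) {A : ℤ → M} {B : ℤ → N} {a b : ℤ}
    (hA : ∀ i < a, A i = 0) (hB : ∀ i, b < i → B i = 0) :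
    ∑ᶠ i, f (A i - A (i - 1)) (B i) = ∑ᶠ i, f (A i) (B i - B (i + 1)) := by
  have hdiag : (fun i => f (A i) (B i)).support.Finite :=
    finite_support_of_eq_zero_outside_Icc a b (fun i hi => by simp [hA i hi])
      (fun i hi => by simp [hB i hi])
  have hleft : (fun i => f (A (i - 1)) (B i)).support.Finite :=
    finite_support_of_eq_zero_outside_Icc a b (fun i hi => by simp [hA (i - 1) (by omega)])
      (fun i hi => by simp [hB i hi])
  have hright : (fun i => f (A i) (B (i + 1))).support.Finite :=
    finite_support_of_eq_zero_outside_Icc a b (fun i hi => by simp [hA i hi])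
      (fun i hi => by simp [hB (i + 1) (by omega)])
  have hshift : ∑ᶠ i, f (A (i - 1)) (B i) = ∑ᶠ i, f (A i) (B (i + 1)) := by
    rw [← finsum_comp_equiv (Equiv.addRight 1)]
    simp
  simp only [map_sub, LinearMap.sub_apply]
  rw [finsum_sub_distrib hdiag hleft, finsum_sub_distrib hdiag hright, hshift]

theorem tensor_pi_alternate_formula_general
    {G H : Type*} [AddCommGroup G] [AddCommGroup H]
    (π : Bool → ℤ → G →+ G) (ρ : Bool → ℤ → H →+ H)
    (hπneg : ∀ (ε : Bool) (k : ℤ), k < 0 → π ε k = 0)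
    (hρneg : ∀ (ε : Bool) (k : ℤ), k < 0 → ρ ε k = 0)
    (ε : Bool) (n : ℤ) (g : G) (h : H) :
    ∑ᶠ i : ℤ, (π ε i g - π ε (i - 1) g) ⊗ₜ[ℤ] ρ (sflip i ε) (n - i) h =
      ∑ᶠ i : ℤ,
        (π ε i g) ⊗ₜ[ℤ]
          (ρ (sflip i ε) (n - i) h - ρ (!(sflip i ε)) (n - i - 1) h) := by
  have hsucc (i : ℤ) : ρ (!sflip i ε) (n - i - 1) h = ρ (sflip (i + 1) ε) (n - (i + 1)) h := by
    rw [sflip_add_one, sub_add_eq_sub_sub]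
  simp only [hsucc]
  exact finsum_bilin_by_parts (TensorProduct.mk ℤ G H) (a := 0) (b := n)
    (fun i hi => by simp [hπneg ε i hi])
    (fun i hi => by simp [hρneg (sflip i ε) (n - i) (by omega)])

/-- In the tensor product of two globular groups, the two formulas
`π_n^ε(g ⊗ h) = Σ_i (π_i^ε - π_{i-1}^ε)(g) ⊗ π_{n-i}^{(-1)^i ε}(h)` and
`π_n^ε(g ⊗ h) = Σ_i π_i^ε(g) ⊗ (π_{n-i}^{(-1)^i ε} - π_{n-i-1}^{-(-1)^i ε})(h)` agree. -/
theorem tensor_pi_alternate_formula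
    {G H : Type*} [AddCommGroup G] [AddCommGroup H]
    (π : Bool → ℤ → G →+ G) (ρ : Bool → ℤ → H →+ H)
    (hπneg : ∀ (ε : Bool) (k : ℤ), k < 0 → π ε k = 0)
    (hρneg : ∀ (ε : Bool) (k : ℤ), k < 0 → ρ ε k = 0)
    (hπlt : ∀ (ε δ : Bool) (i j : ℤ), i < j → ∀ x, π ε i (π δ j x) = π ε i x)
    (hπle : ∀ (ε δ : Bool) (i j : ℤ), j ≤ i → ∀ x, π ε i (π δ j x) = π δ j x)
    (hρlt : ∀ (ε δ : Bool) (i j : ℤ), i < j → ∀ y, ρ ε i (ρ δ j y) = ρ ε i y)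
    (hρle : ∀ (ε δ : Bool) (i j : ℤ), j ≤ i → ∀ y, ρ ε i (ρ δ j y) = ρ δ j y)
    (hπar : ∀ x : G, ∃ n : ℤ, π true n x = x)
    (hρar : ∀ y : H, ∃ n : ℤ, ρ true n y = y)
    (ε : Bool) (n : ℤ) (g : G) (h : H) :
    ∑ᶠ i : ℤ, (π ε i g - π ε (i - 1) g) ⊗ₜ[ℤ] ρ (sflip i ε) (n - i) h =
      ∑ᶠ i : ℤ,
        (π ε i g) ⊗ₜ[ℤ]
          (ρ (sflip i ε) (n - i) h - ρ (!(sflip i ε)) (n - i - 1) h) :=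
  tensor_pi_alternate_formula_general π ρ hπneg hρneg ε n g h
end

section
/- For globular groups G, H and the tensor product globular group G ⊗ H with π_n^ε(g ⊗ h) = Σ_i (π_i^ε - π_{i-1}^ε)(g) ⊗ π_{n-i}^{(-1)^i ε}(h), one has the identity (π_n^ε - π_{n-1}^δ)(x ⊗ y) = Σ_{i+j=n} (π_i^ε - π_{i-1}^δ)(x) ⊗ (π_j^{(-1)^i ε} - π_{j-1}^{(-1)^i δ})(y). -/
open scoped TensorProduct

/-- For the tensor product globular group structure
`π_n^ε(g ⊗ h) = Σ_i (π_i^ε - π_{i-1}^ε)(g) ⊗ π_{n-i}^{(-1)^i ε}(h)`, one has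
`(π_n^ε - π_{n-1}^δ)(x ⊗ y) = Σ_{i+j=n} (π_i^ε - π_{i-1}^δ)(x) ⊗ (π_j^{(-1)^i ε} - π_{j-1}^{(-1)^i δ})(y)`. -/
theorem tensor_pi_projection_decomposition
    {G H : Type*} [AddCommGroup G] [AddCommGroup H]
    (π : Bool → ℤ → G →+ G) (ρ : Bool → ℤ → H →+ H)
    (hπneg : ∀ (ε : Bool) (k : ℤ), k < 0 → π ε k = 0)
    (hρneg : ∀ (ε : Bool) (k : ℤ), k < 0 → ρ ε k = 0)
    (hπlt : ∀ (ε δ : Bool) (i j : ℤ), i < j → ∀ x, π ε i (π δ j x) = π ε i x)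
    (hπle : ∀ (ε δ : Bool) (i j : ℤ), j ≤ i → ∀ x, π ε i (π δ j x) = π δ j x)
    (hρlt : ∀ (ε δ : Bool) (i j : ℤ), i < j → ∀ y, ρ ε i (ρ δ j y) = ρ ε i y)
    (hρle : ∀ (ε δ : Bool) (i j : ℤ), j ≤ i → ∀ y, ρ ε i (ρ δ j y) = ρ δ j y)
    (hπar : ∀ x : G, ∃ n : ℤ, π true n x = x)
    (hρar : ∀ y : H, ∃ n : ℤ, ρ true n y = y)
    (ε δ : Bool) (n : ℤ) (x : G) (y : H) :
    (∑ᶠ i : ℤ, (π ε i x - π ε (i - 1) x) ⊗ₜ[ℤ] ρ (sflip i ε) (n - i) y) -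
        (∑ᶠ i : ℤ, (π δ i x - π δ (i - 1) x) ⊗ₜ[ℤ] ρ (sflip i δ) (n - 1 - i) y) =
      ∑ᶠ i : ℤ,
        (π ε i x - π δ (i - 1) x) ⊗ₜ[ℤ]
          (ρ (sflip i ε) (n - i) y - ρ (sflip i δ) (n - i - 1) y) := by
  classical
  set s : Finset ℤ := Finset.Icc (-1) n with hs
  -- the key shifted family
  set f : ℤ → TensorProduct ℤ G H :=
    fun i => (π ε i x - π δ i x) ⊗ₜ[ℤ] ρ (sflip i δ) (n - i - 1) y with hf
  have hπ0 : ∀ (e : Bool) (k : ℤ), k < 0 → π e k x = 0 := by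
    intro e k hk; rw [hπneg e k hk]; rfl
  have hρ0 : ∀ (e : Bool) (k : ℤ), k < 0 → ρ e k y = 0 := by
    intro e k hk; rw [hρneg e k hk]; rfl
  have hf0 : ∀ i : ℤ, i < 0 ∨ n - 1 < i → f i = 0 := by
    intro i hi
    rcases hi with hi | hi
    · simp [hf, hπ0 _ _ hi]
    · have : n - i - 1 < 0 := by omega
      simp [hf, hρ0 _ _ this]
  -- pointwise identification of the shifted cross term
  have hkey : ∀ i : ℤ,
      (π ε (i - 1) x - π δ (i - 1) x) ⊗ₜ[ℤ] ρ (sflip i ε) (n - i) y = f (i - 1) := by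
    intro i
    have harg : n - (i - 1) - 1 = n - i := by ring
    by_cases hed : ε = δ
    · subst hed; simp [hf]
    · have hδ : δ = !ε := by
        cases ε <;> cases δ <;> simp_all
      subst hδ
      have hsf : sflip (i - 1) (!ε) = sflip i ε := by
        by_cases h : Even i
        · have : ¬ Even (i - 1) := by
            simpa [Int.even_sub_one] using h
          simp [sflip, h, this]
        · have : Even (i - 1) := by
            simpa [Int.even_sub_one] using h
          simp [sflip, h, this]
      simp only [hf]
      rw [harg, hsf]
  -- convert the three finsums to sums over `s`
  have hc1 : (∑ᶠ i : ℤ, (π ε i x - π ε (i - 1) x) ⊗ₜ[ℤ] ρ (sflip i ε) (n - i) y) =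
      ∑ i ∈ s, (π ε i x - π ε (i - 1) x) ⊗ₜ[ℤ] ρ (sflip i ε) (n - i) y := by
    apply finsum_eq_sum_of_support_subset
    intro i hi
    simp only [Finset.coe_Icc, Set.mem_Icc, hs]
    by_contra hmem
    push_neg at hmem
    apply hi
    rcases lt_or_ge i 0 with h | h
    · simp [hπ0 _ _ h, hπ0 _ _ (by omega : i - 1 < 0)]
    · have : n - i < 0 := by omega
      simp [hρ0 _ _ this]
  have hc2 : (∑ᶠ i : ℤ, (π δ i x - π δ (i - 1) x) ⊗ₜ[ℤ] ρ (sflip i δ) (n - 1 - i) y) =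
      ∑ i ∈ s, (π δ i x - π δ (i - 1) x) ⊗ₜ[ℤ] ρ (sflip i δ) (n - 1 - i) y := by
    apply finsum_eq_sum_of_support_subset
    intro i hi
    simp only [Finset.coe_Icc, Set.mem_Icc, hs]
    by_contra hmem
    push_neg at hmem
    apply hi
    rcases lt_or_ge i 0 with h | h
    · simp [hπ0 _ _ h, hπ0 _ _ (by omega : i - 1 < 0)]
    · have : n - 1 - i < 0 := by omega
      simp [hρ0 _ _ this]
  have hc3 : (∑ᶠ i : ℤ, (π ε i x - π δ (i - 1) x) ⊗ₜ[ℤ]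
        (ρ (sflip i ε) (n - i) y - ρ (sflip i δ) (n - i - 1) y)) =
      ∑ i ∈ s, (π ε i x - π δ (i - 1) x) ⊗ₜ[ℤ]
        (ρ (sflip i ε) (n - i) y - ρ (sflip i δ) (n - i - 1) y) := by
    apply finsum_eq_sum_of_support_subset
    intro i hi
    simp only [Finset.coe_Icc, Set.mem_Icc, hs]
    by_contra hmem
    push_neg at hmem
    apply hi
    rcases lt_or_ge i 0 with h | h
    · simp [hπ0 _ _ h, hπ0 _ _ (by omega : i - 1 < 0)]
    · have h1 : n - i < 0 := by omega
      have h2 : n - i - 1 < 0 := by omega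
      simp [hρ0 _ _ h1, hρ0 _ _ h2]
  -- the shift identity for sums of `f`
  have hshift : (∑ i ∈ s, f (i - 1)) = ∑ i ∈ s, f i := by
    have h1 : (∑ i ∈ s, f (i - 1)) =
        ∑ i ∈ Finset.Icc (-2 : ℤ) (n - 1), f i := by
      rw [show Finset.Icc (-2 : ℤ) (n - 1) = s.map (addRightEmbedding (-1)) by
        rw [hs, Finset.map_add_right_Icc]; congr 1 <;> ring]
      rw [Finset.sum_map]
      exact Finset.sum_congr rfl fun i _ => by
        simp [addRightEmbedding_apply, sub_eq_add_neg]
    rw [h1]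
    have h2 : (∑ i ∈ Finset.Icc (-2 : ℤ) (n - 1), f i) =
        ∑ i ∈ Finset.Icc (-2 : ℤ) n, f i := by
      apply Finset.sum_subset
      · apply Finset.Icc_subset_Icc_right; omega
      · intro i hi hni
        simp only [Finset.mem_Icc] at hi hni
        exact hf0 i (by omega)
    have h3 : (∑ i ∈ s, f i) = ∑ i ∈ Finset.Icc (-2 : ℤ) n, f i := by
      apply Finset.sum_subset
      · rw [hs]; apply Finset.Icc_subset_Icc_left; omega
      · intro i hi hni
        simp only [hs, Finset.mem_Icc] at hi hni
        exact hf0 i (by omega)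
    rw [h2, h3]
  rw [hc1, hc2, hc3, ← sub_eq_zero, ← Finset.sum_sub_distrib, ← Finset.sum_sub_distrib]
  have hpt : ∀ i ∈ s, (π ε i x - π ε (i - 1) x) ⊗ₜ[ℤ] ρ (sflip i ε) (n - i) y -
      (π δ i x - π δ (i - 1) x) ⊗ₜ[ℤ] ρ (sflip i δ) (n - 1 - i) y -
      (π ε i x - π δ (i - 1) x) ⊗ₜ[ℤ]
        (ρ (sflip i ε) (n - i) y - ρ (sflip i δ) (n - i - 1) y) = f i - f (i - 1) := by
    intro i _
    rw [← hkey i, hf]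
    simp only [show n - 1 - i = n - i - 1 by ring, TensorProduct.sub_tmul,
      TensorProduct.tmul_sub]
    abel
  rw [Finset.sum_congr rfl hpt, Finset.sum_sub_distrib, hshift, sub_self]
end

section
/- Let G, H be globular groups and g ∈ G_i (an i-arrow), h ∈ H_j (a j-arrow). Then in the tensor product globular group, for any n ≤ i+j: π_n^ε(g ⊗ h) = Σ_{a+b=n, a≤i, b≤j} π_a^ε(g) ⊗ π_b^{(-1)^a ε}(h) - Σ_{a+b=n-1, a<i, b<j} π_a^ε(g) ⊗ π_b^{-(-1)^a ε}(h). In particular, g ⊗ h is an (i+j)-arrow, and π_{i+j-1}^ε(g ⊗ h) = π_{i-1}^ε(g) ⊗ h + g ⊗ π_{j-1}^{(-1)^i ε}(h) - π_{i-1}^ε(g) ⊗ π_{j-1}^{(-1)^i ε}(h). -/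
open scoped TensorProduct

lemma sflip_succ (k : ℤ) (ε : Bool) : sflip (k + 1) ε = !(sflip k ε) := by
  by_cases hk : Even k
  · simp [sflip, Int.even_add_one, hk]
  · simp [sflip, Int.even_add_one, hk]

/-- If `g` is an `i`-arrow of `G` and `h` a `j`-arrow of `H`, then in the tensor
product globular group, for `n ≤ i + j`:
`π_n^ε(g ⊗ h) = Σ_{a+b=n, a≤i, b≤j} π_a^ε g ⊗ π_b^{(-1)^a ε} h
              - Σ_{a+b=n-1, a<i, b<j} π_a^ε g ⊗ π_b^{-(-1)^a ε} h`.
In particular `g ⊗ h` is an `(i+j)`-arrow, and the stated formula for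
`π_{i+j-1}^ε (g ⊗ h)` holds. -/
theorem tensor_pi_on_arrows
    {G H : Type*} [AddCommGroup G] [AddCommGroup H]
    (π : Bool → ℤ → G →+ G) (ρ : Bool → ℤ → H →+ H)
    (hπneg : ∀ (ε : Bool) (k : ℤ), k < 0 → π ε k = 0)
    (hρneg : ∀ (ε : Bool) (k : ℤ), k < 0 → ρ ε k = 0)
    (hπlt : ∀ (ε δ : Bool) (i j : ℤ), i < j → ∀ x, π ε i (π δ j x) = π ε i x)
    (hπle : ∀ (ε δ : Bool) (i j : ℤ), j ≤ i → ∀ x, π ε i (π δ j x) = π δ j x)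
    (hρlt : ∀ (ε δ : Bool) (i j : ℤ), i < j → ∀ y, ρ ε i (ρ δ j y) = ρ ε i y)
    (hρle : ∀ (ε δ : Bool) (i j : ℤ), j ≤ i → ∀ y, ρ ε i (ρ δ j y) = ρ δ j y)
    (hπar : ∀ x : G, ∃ n : ℤ, π true n x = x)
    (hρar : ∀ y : H, ∃ n : ℤ, ρ true n y = y)
    (πT : Bool → ℤ → G ⊗[ℤ] H → G ⊗[ℤ] H)
    (hTadd : ∀ (ε : Bool) (n : ℤ) (a b : G ⊗[ℤ] H),
      πT ε n (a + b) = πT ε n a + πT ε n b)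
    (hTdef : ∀ (ε : Bool) (n : ℤ) (g : G) (h : H),
      πT ε n (g ⊗ₜ[ℤ] h) =
        ∑ᶠ k : ℤ, (π ε k g - π ε (k - 1) g) ⊗ₜ[ℤ] ρ (sflip k ε) (n - k) h)
    (i j : ℤ) (hi : 0 ≤ i) (hj : 0 ≤ j)
    (g : G) (h : H) (hg : π true i g = g) (hh : ρ true j h = h) :
    (∀ (ε : Bool) (n : ℤ), n ≤ i + j →
      πT ε n (g ⊗ₜ[ℤ] h) =
        (∑ a ∈ Finset.Icc (n - j) i, (π ε a g) ⊗ₜ[ℤ] ρ (sflip a ε) (n - a) h) -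
          ∑ a ∈ Finset.Icc (n - j) (i - 1),
            (π ε a g) ⊗ₜ[ℤ] ρ (!(sflip a ε)) (n - 1 - a) h) ∧
    (∀ (ε : Bool) (n : ℤ), i + j ≤ n → πT ε n (g ⊗ₜ[ℤ] h) = g ⊗ₜ[ℤ] h) ∧
    (∀ ε : Bool,
      πT ε (i + j - 1) (g ⊗ₜ[ℤ] h) =
        (π ε (i - 1) g) ⊗ₜ[ℤ] h + g ⊗ₜ[ℤ] ρ (sflip i ε) (j - 1) h -
          (π ε (i - 1) g) ⊗ₜ[ℤ] ρ (sflip i ε) (j - 1) h) := by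
  classical
  have hπg : ∀ (ε : Bool) (k : ℤ), i ≤ k → π ε k g = g := by
    intro ε k hk
    conv_lhs => rw [← hg]
    rw [hπle ε true k i hk, hg]
  have hρh : ∀ (δ : Bool) (m : ℤ), j ≤ m → ρ δ m h = h := by
    intro δ m hm
    conv_lhs => rw [← hh]
    rw [hρle δ true m j hm, hh]
  have hπg0 : ∀ (ε : Bool) (k : ℤ), k < 0 → π ε k g = 0 := by
    intro ε k hk; rw [hπneg ε k hk]; rfl
  -- reindexing lemma
  have reidx : ∀ F : ℤ → G ⊗[ℤ] H,
      ∑ k ∈ Finset.Icc (-1 : ℤ) (i - 1), F k = ∑ k ∈ Finset.Icc (0 : ℤ) i, F (k - 1) := by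
    intro F
    have hmap : Finset.Icc (-1 : ℤ) (i - 1) =
        Finset.map (addRightEmbedding (-1)) (Finset.Icc (0 : ℤ) i) := by
      rw [Finset.map_add_right_Icc]
      congr 1 <;> ring
    rw [hmap, Finset.sum_map]
    refine Finset.sum_congr rfl fun k _ => ?_
    congr 1
  -- the common step: Abel summation
  have step : ∀ (ε : Bool) (n : ℤ),
      πT ε n (g ⊗ₜ[ℤ] h) =
        (∑ k ∈ Finset.Icc (0 : ℤ) i, (π ε k g) ⊗ₜ[ℤ] ρ (sflip k ε) (n - k) h) -
          ∑ k ∈ Finset.Icc (0 : ℤ) (i - 1),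
            (π ε k g) ⊗ₜ[ℤ] ρ (!(sflip k ε)) (n - 1 - k) h := by
    intro ε n
    rw [hTdef]
    rw [finsum_eq_finset_sum_of_support_subset _
      (s := Finset.Icc (0 : ℤ) i) ?hsupp]
    case hsupp =>
      intro k hk
      simp only [Function.mem_support, ne_eq] at hk
      simp only [Finset.coe_Icc, Set.mem_Icc]
      by_contra hc
      push_neg at hc
      rcases lt_or_ge k 0 with hk0 | hk0
      · apply hk
        rw [hπg0 ε k hk0, hπg0 ε (k - 1) (by omega), sub_zero,
          TensorProduct.zero_tmul]
      · have : i < k := hc hk0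
        apply hk
        rw [hπg ε k (by omega), hπg ε (k - 1) (by omega), sub_self,
          TensorProduct.zero_tmul]
    have expand : ∀ k : ℤ,
        (π ε k g - π ε (k - 1) g) ⊗ₜ[ℤ] ρ (sflip k ε) (n - k) h =
          (π ε k g) ⊗ₜ[ℤ] ρ (sflip k ε) (n - k) h -
            (π ε (k - 1) g) ⊗ₜ[ℤ] ρ (sflip k ε) (n - k) h := by
      intro k
      rw [TensorProduct.sub_tmul]
    rw [Finset.sum_congr rfl fun k _ => expand k, Finset.sum_sub_distrib]
    congr 1
    calc ∑ k ∈ Finset.Icc (0 : ℤ) i,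
          (π ε (k - 1) g) ⊗ₜ[ℤ] ρ (sflip k ε) (n - k) h
        = ∑ k ∈ Finset.Icc (-1 : ℤ) (i - 1),
            (π ε k g) ⊗ₜ[ℤ] ρ (sflip (k + 1) ε) (n - (k + 1)) h := by
          rw [reidx]
          refine Finset.sum_congr rfl fun k _ => ?_
          rw [show k - 1 + 1 = k from by ring]
      _ = ∑ k ∈ Finset.Icc (0 : ℤ) (i - 1),
            (π ε k g) ⊗ₜ[ℤ] ρ (sflip (k + 1) ε) (n - (k + 1)) h := by
          refine (Finset.sum_subset
            (Finset.Icc_subset_Icc_left (by norm_num : (-1 : ℤ) ≤ 0))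
            fun k hk hk' => ?_).symm
          simp only [Finset.mem_Icc] at hk hk'
          have hk1 : k = -1 := by omega
          rw [hk1, hπg0 ε (-1) (by norm_num), TensorProduct.zero_tmul]
      _ = ∑ k ∈ Finset.Icc (0 : ℤ) (i - 1),
            (π ε k g) ⊗ₜ[ℤ] ρ (!(sflip k ε)) (n - 1 - k) h := by
          refine Finset.sum_congr rfl fun k _ => ?_
          rw [sflip_succ, show n - (k + 1) = n - 1 - k from by ring]
  have key : ∀ (ε : Bool) (n : ℤ), n ≤ i + j →
      πT ε n (g ⊗ₜ[ℤ] h) =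
        (∑ a ∈ Finset.Icc (n - j) i, (π ε a g) ⊗ₜ[ℤ] ρ (sflip a ε) (n - a) h) -
          ∑ a ∈ Finset.Icc (n - j) (i - 1),
            (π ε a g) ⊗ₜ[ℤ] ρ (!(sflip a ε)) (n - 1 - a) h := by
    intro ε n hn
    rw [step ε n]
    set L : ℤ := min (n - j) 0 with hL
    have hL0 : L ≤ 0 := min_le_right _ _
    have hLnj : L ≤ n - j := min_le_left _ _
    have hnji : n - j ≤ i := by omega
    -- extend sums down to L
    have ext1 : ∑ k ∈ Finset.Icc (0 : ℤ) i, (π ε k g) ⊗ₜ[ℤ] ρ (sflip k ε) (n - k) h =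
        ∑ k ∈ Finset.Icc L i, (π ε k g) ⊗ₜ[ℤ] ρ (sflip k ε) (n - k) h := by
      refine Finset.sum_subset (Finset.Icc_subset_Icc_left hL0) fun k hk hk' => ?_
      simp only [Finset.mem_Icc] at hk hk'
      rw [hπg0 ε k (by omega), TensorProduct.zero_tmul]
    have ext2 : ∑ k ∈ Finset.Icc (0 : ℤ) (i - 1),
          (π ε k g) ⊗ₜ[ℤ] ρ (!(sflip k ε)) (n - 1 - k) h =
        ∑ k ∈ Finset.Icc L (i - 1), (π ε k g) ⊗ₜ[ℤ] ρ (!(sflip k ε)) (n - 1 - k) h := by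
      refine Finset.sum_subset (Finset.Icc_subset_Icc_left hL0) fun k hk hk' => ?_
      simp only [Finset.mem_Icc] at hk hk'
      rw [hπg0 ε k (by omega), TensorProduct.zero_tmul]
    rw [ext1, ext2]
    -- split at n - j
    have split1 : ∑ k ∈ Finset.Icc L i, (π ε k g) ⊗ₜ[ℤ] ρ (sflip k ε) (n - k) h =
        (∑ k ∈ Finset.Icc L (n - j - 1), (π ε k g) ⊗ₜ[ℤ] ρ (sflip k ε) (n - k) h) +
          ∑ k ∈ Finset.Icc (n - j) i, (π ε k g) ⊗ₜ[ℤ] ρ (sflip k ε) (n - k) h := by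
      rw [← Finset.sum_sdiff (Finset.Icc_subset_Icc_left hLnj)]
      congr 1
      apply Finset.sum_congr _ fun _ _ => rfl
      ext k
      simp only [Finset.mem_sdiff, Finset.mem_Icc]
      omega
    have split2 : ∑ k ∈ Finset.Icc L (i - 1),
          (π ε k g) ⊗ₜ[ℤ] ρ (!(sflip k ε)) (n - 1 - k) h =
        (∑ k ∈ Finset.Icc L (n - j - 1),
            (π ε k g) ⊗ₜ[ℤ] ρ (!(sflip k ε)) (n - 1 - k) h) +
          ∑ k ∈ Finset.Icc (n - j) (i - 1),
            (π ε k g) ⊗ₜ[ℤ] ρ (!(sflip k ε)) (n - 1 - k) h := by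
      rw [← Finset.sum_sdiff (Finset.Icc_subset_Icc_left hLnj)]
      congr 1
      apply Finset.sum_congr _ fun _ _ => rfl
      ext k
      simp only [Finset.mem_sdiff, Finset.mem_Icc]
      omega
    rw [split1, split2]
    have cancel : ∑ k ∈ Finset.Icc L (n - j - 1),
          (π ε k g) ⊗ₜ[ℤ] ρ (sflip k ε) (n - k) h =
        ∑ k ∈ Finset.Icc L (n - j - 1),
          (π ε k g) ⊗ₜ[ℤ] ρ (!(sflip k ε)) (n - 1 - k) h := by
      refine Finset.sum_congr rfl fun k hk => ?_
      simp only [Finset.mem_Icc] at hk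
      rw [hρh _ (n - k) (by omega), hρh _ (n - 1 - k) (by omega)]
    rw [cancel]
    abel
  refine ⟨key, ?_, ?_⟩
  · -- part 2
    intro ε n hn
    rw [step ε n]
    have const : ∀ k ∈ Finset.Icc (0 : ℤ) i,
        (π ε k g) ⊗ₜ[ℤ] ρ (sflip k ε) (n - k) h = (π ε k g) ⊗ₜ[ℤ] h := by
      intro k hk
      simp only [Finset.mem_Icc] at hk
      rw [hρh _ (n - k) (by omega)]
    have const' : ∀ k ∈ Finset.Icc (0 : ℤ) (i - 1),
        (π ε k g) ⊗ₜ[ℤ] ρ (!(sflip k ε)) (n - 1 - k) h = (π ε k g) ⊗ₜ[ℤ] h := by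
      intro k hk
      simp only [Finset.mem_Icc] at hk
      rw [hρh _ (n - 1 - k) (by omega)]
    rw [Finset.sum_congr rfl const, Finset.sum_congr rfl const']
    have top : Finset.Icc (0 : ℤ) i = insert i (Finset.Icc (0 : ℤ) (i - 1)) := by
      ext k
      simp only [Finset.mem_insert, Finset.mem_Icc]
      omega
    rw [top, Finset.sum_insert (by simp [Finset.mem_Icc])]
    rw [hπg ε i le_rfl]
    abel
  · -- part 3
    intro ε
    rw [key ε (i + j - 1) (by omega)]
    have e0 : i + j - 1 - j = i - 1 := by ring
    rw [e0]
    have eset : Finset.Icc (i - 1) i = insert (i - 1) {i} := by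
      ext k
      simp only [Finset.mem_insert, Finset.mem_singleton, Finset.mem_Icc]
      omega
    rw [eset, Finset.sum_insert (by simp only [Finset.mem_singleton]; omega),
        Finset.sum_singleton, Finset.Icc_self, Finset.sum_singleton]
    have ef : (!(sflip (i - 1) ε)) = sflip i ε := by
      by_cases hp : Even i <;> simp [sflip, hp, Int.even_sub_one]
    have e2 : i + j - 1 - (i - 1) = j := by ring
    have e3 : i + j - 1 - i = j - 1 := by ring
    have e4 : i + j - 1 - 1 - (i - 1) = j - 1 := by ring
    rw [e2, e3, e4, ef, hπg ε i le_rfl, hρh _ j le_rfl]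
end

section
/- Under the identification of the chain complex of the tensor product of globular groups with the tensor product of their chain complexes (P(G⊗H)_n ≅ ⊕_{i+j=n} PG_i ⊗ PH_j, induced by g ⊗ h ↦ [g] ⊗ [h]), the differential is given by the Koszul rule: ∂([g] ⊗ [h]) = ∂[g] ⊗ [h] + (-1)^i [g] ⊗ ∂[h] for [g] ∈ PG_i, [h] ∈ PH_j. -/
open scoped TensorProduct

/-!
Fix `g ∈ G_i`, `h ∈ H_j` and a sign `ε`. In `π_{i+j-1}^ε (g ⊗ h)` the summands of degree
`k ≤ i - 1` see `h` unchanged, so they telescope to `π_{i-1}^ε g ⊗ h`, and the only other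
summand is `(g - π_{i-1}^ε g) ⊗ π_{j-1}^{(-1)^i ε} h`. Subtracting the two signs gives the
Koszul formula up to `π_{i-1}^- g ⊗ π_{j-1}^{(-1)^i -} h - π_{i-1}^+ g ⊗ π_{j-1}^{(-1)^i +} h`,
whose elementary tensors have total degree `i + j - 2` and are therefore fixed by `π_{i+j-2}^+`.
-/

theorem Finset.sum_Icc_zero_sub_pred {A : Type*} [AddCommGroup A] (F : ℤ → A) {a : ℤ}
    (ha : -1 ≤ a) : ∑ k ∈ Finset.Icc 0 a, (F k - F (k - 1)) = F a - F (-1) := by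
  induction a, ha using Int.leInduction with
  | base => simp
  | succ b hb ih =>
    rw [← Finset.insert_Icc_right_eq_Icc_add_one (by omega), Finset.sum_insert (by simp),
      add_sub_cancel_right, ih]
    abel

theorem sflip_true_sub_sflip_false {A : Type*} [AddCommGroup A] (f : Bool → A) {i : ℤ}
    (hi : 0 ≤ i) :
    f (sflip i true) - f (sflip i false) = (-1 : ℤ) ^ i.toNat • (f true - f false) := by
  lift i to ℕ using hi
  rcases Nat.even_or_odd i with hev | hodd
  · simp [sflip, hev, hev.neg_one_pow]
  · simp [sflip, Nat.not_even_iff_odd.mpr hodd, hodd.neg_one_pow]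

section Filtration

variable {G : Type*} [AddCommGroup G] {π : Bool → ℤ → G →+ G}

theorem apply_eq_self_of_le
    (hπle : ∀ (ε δ : Bool) (i j : ℤ), j ≤ i → ∀ x, π ε i (π δ j x) = π δ j x)
    {a : ℤ} {x : G} (hx : π true a x = x) (ε : Bool) {k : ℤ} (hak : a ≤ k) :
    π ε k x = x := by
  rw [← hx]
  exact hπle ε true k a hak x

theorem sum_Icc_zero_sub_pred_eq
    (hπneg : ∀ (ε : Bool) (k : ℤ), k < 0 → π ε k = 0) (ε : Bool) {a : ℤ} (ha : -1 ≤ a)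
    (x : G) : ∑ k ∈ Finset.Icc 0 a, (π ε k x - π ε (k - 1) x) = π ε a x := by
  rw [Finset.sum_Icc_zero_sub_pred (fun k => π ε k x) ha, hπneg ε (-1) (by norm_num),
    AddMonoidHom.zero_apply, sub_zero]

theorem support_sub_pred_subset
    (hπneg : ∀ (ε : Bool) (k : ℤ), k < 0 → π ε k = 0)
    (hπle : ∀ (ε δ : Bool) (i j : ℤ), j ≤ i → ∀ x, π ε i (π δ j x) = π δ j x)
    {a : ℤ} {x : G} (hx : π true a x = x) (ε : Bool) :
    Function.support (fun k => π ε k x - π ε (k - 1) x) ⊆ Finset.Icc 0 a := by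
  intro k hk
  by_contra hout
  simp only [Finset.coe_Icc, Set.mem_Icc, not_and_or, not_le] at hout
  apply hk
  beta_reduce
  rcases hout with hneg | htop
  · simp [hπneg ε k hneg, hπneg ε (k - 1) (by omega)]
  · rw [apply_eq_self_of_le hπle hx ε (by omega : a ≤ k),
      apply_eq_self_of_le hπle hx ε (by omega : a ≤ k - 1), sub_self]

end Filtration

section TensorFiltration

variable {G H : Type*} [AddCommGroup G] [AddCommGroup H]
  {π : Bool → ℤ → G →+ G} {ρ : Bool → ℤ → H →+ H}

theorem finsum_sub_pred_tmul_eq_sum_Icc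
    (hπneg : ∀ (ε : Bool) (k : ℤ), k < 0 → π ε k = 0)
    (hπle : ∀ (ε δ : Bool) (i j : ℤ), j ≤ i → ∀ x, π ε i (π δ j x) = π δ j x)
    {a : ℤ} {x : G} (hx : π true a x = x) (ε : Bool) (c : ℤ → H) :
    ∑ᶠ k : ℤ, (π ε k x - π ε (k - 1) x) ⊗ₜ[ℤ] c k =
      ∑ k ∈ Finset.Icc 0 a, (π ε k x - π ε (k - 1) x) ⊗ₜ[ℤ] c k := by
  refine finsum_eq_sum_of_support_subset _ (subset_trans ?_
    (support_sub_pred_subset hπneg hπle hx ε))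
  exact Function.support_subset_iff'.mpr fun k hk => by simp [Function.notMem_support.mp hk]

theorem finsum_tmul_eq_self_of_le
    (hπneg : ∀ (ε : Bool) (k : ℤ), k < 0 → π ε k = 0)
    (hπle : ∀ (ε δ : Bool) (i j : ℤ), j ≤ i → ∀ x, π ε i (π δ j x) = π δ j x)
    (hρle : ∀ (ε δ : Bool) (i j : ℤ), j ≤ i → ∀ y, ρ ε i (ρ δ j y) = ρ δ j y)
    {a b n : ℤ} (ha : -1 ≤ a) (hab : a + b ≤ n) {x : G} {y : H}
    (hx : π true a x = x) (hy : ρ true b y = y) :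
    ∑ᶠ k : ℤ, (π true k x - π true (k - 1) x) ⊗ₜ[ℤ] ρ (sflip k true) (n - k) y = x ⊗ₜ[ℤ] y := by
  have hρ : ∀ k ∈ Finset.Icc 0 a, ρ (sflip k true) (n - k) y = y := fun k hk =>
    apply_eq_self_of_le hρle hy _ (by simp at hk; omega)
  rw [finsum_sub_pred_tmul_eq_sum_Icc hπneg hπle hx, Finset.sum_congr rfl fun k hk => by
    rw [hρ k hk], ← TensorProduct.sum_tmul, sum_Icc_zero_sub_pred_eq hπneg true ha, hx]

theorem finsum_tmul_of_degree_sub_one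
    (hπneg : ∀ (ε : Bool) (k : ℤ), k < 0 → π ε k = 0)
    (hπle : ∀ (ε δ : Bool) (i j : ℤ), j ≤ i → ∀ x, π ε i (π δ j x) = π δ j x)
    (hρle : ∀ (ε δ : Bool) (i j : ℤ), j ≤ i → ∀ y, ρ ε i (ρ δ j y) = ρ δ j y)
    {i j : ℤ} (hi : 0 ≤ i) {x : G} {y : H} (hx : π true i x = x) (hy : ρ true j y = y)
    (ε : Bool) :
    ∑ᶠ k : ℤ, (π ε k x - π ε (k - 1) x) ⊗ₜ[ℤ] ρ (sflip k ε) (i + j - 1 - k) y =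
      π ε (i - 1) x ⊗ₜ[ℤ] y + (x - π ε (i - 1) x) ⊗ₜ[ℤ] ρ (sflip i ε) (j - 1) y := by
  have hρ : ∀ k ∈ Finset.Icc 0 (i - 1), ρ (sflip k ε) (i + j - 1 - k) y = y := fun k hk =>
    apply_eq_self_of_le hρle hy _ (by simp at hk; omega)
  rw [finsum_sub_pred_tmul_eq_sum_Icc hπneg hπle hx, ← Finset.insert_Icc_sub_one_right_eq_Icc hi,
    Finset.sum_insert (by simp), Finset.sum_congr rfl fun k hk => by rw [hρ k hk],
    ← TensorProduct.sum_tmul, sum_Icc_zero_sub_pred_eq hπneg ε (by omega),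
    apply_eq_self_of_le hπle hx ε le_rfl, show i + j - 1 - i = j - 1 by ring, add_comm]

end TensorFiltration

theorem tensor_differential_koszul_general
    {G H : Type*} [AddCommGroup G] [AddCommGroup H]
    (π : Bool → ℤ → G →+ G) (ρ : Bool → ℤ → H →+ H)
    (hπneg : ∀ (ε : Bool) (k : ℤ), k < 0 → π ε k = 0)
    (hπle : ∀ (ε δ : Bool) (i j : ℤ), j ≤ i → ∀ x, π ε i (π δ j x) = π δ j x)
    (hρle : ∀ (ε δ : Bool) (i j : ℤ), j ≤ i → ∀ y, ρ ε i (ρ δ j y) = ρ δ j y)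
    (πT : Bool → ℤ → G ⊗[ℤ] H → G ⊗[ℤ] H)
    (hTadd : ∀ (ε : Bool) (n : ℤ) (a b : G ⊗[ℤ] H),
      πT ε n (a + b) = πT ε n a + πT ε n b)
    (hTdef : ∀ (ε : Bool) (n : ℤ) (g : G) (h : H),
      πT ε n (g ⊗ₜ[ℤ] h) =
        ∑ᶠ k : ℤ, (π ε k g - π ε (k - 1) g) ⊗ₜ[ℤ] ρ (sflip k ε) (n - k) h)
    (i j : ℤ) (hi : 0 ≤ i)
    (g : G) (h : H) (hg : π true i g = g) (hh : ρ true j h = h) :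
    ∃ w : G ⊗[ℤ] H, πT true (i + j - 2) w = w ∧
      πT true (i + j - 1) (g ⊗ₜ[ℤ] h) - πT false (i + j - 1) (g ⊗ₜ[ℤ] h) =
        (π true (i - 1) g - π false (i - 1) g) ⊗ₜ[ℤ] h +
          ((-1 : ℤ) ^ i.toNat) •
            (g ⊗ₜ[ℤ] (ρ true (j - 1) h - ρ false (j - 1) h)) + w := by
  have hfix : ∀ ε δ, πT true (i + j - 2) (π ε (i - 1) g ⊗ₜ[ℤ] ρ δ (j - 1) h) =
      π ε (i - 1) g ⊗ₜ[ℤ] ρ δ (j - 1) h := fun ε δ => by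
    rw [hTdef]
    exact finsum_tmul_eq_self_of_le hπneg hπle hρle (by omega) (by omega)
      (hπle true ε _ _ le_rfl g) (hρle true δ _ _ le_rfl h)
  refine ⟨π false (i - 1) g ⊗ₜ[ℤ] ρ (sflip i false) (j - 1) h
      - π true (i - 1) g ⊗ₜ[ℤ] ρ (sflip i true) (j - 1) h, ?_, ?_⟩
  · have hsub := map_sub (AddMonoidHom.mk' (πT true (i + j - 2)) (hTadd true _))
    simp only [AddMonoidHom.mk'_apply] at hsub
    rw [hsub, hfix, hfix]
  · rw [hTdef, hTdef, finsum_tmul_of_degree_sub_one hπneg hπle hρle hi hg hh,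
      finsum_tmul_of_degree_sub_one hπneg hπle hρle hi hg hh, ← TensorProduct.tmul_smul,
      ← sflip_true_sub_sflip_false (fun ε => ρ ε (j - 1) h) hi]
    simp only [TensorProduct.sub_tmul, TensorProduct.tmul_sub]
    abel

/-- Under the identification `P(G⊗H)_n ≅ ⊕_{i+j=n} PG_i ⊗ PH_j` (classes of elementary
tensors), the differential of the tensor product of globular groups is given by the
Koszul rule: for `g ∈ G_i` and `h ∈ H_j`,
`∂(g ⊗ h) = ∂g ⊗ h + (-1)^i g ⊗ ∂h` modulo `(G⊗H)_{i+j-2}`, where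
`∂` is induced by `π_{•}^+ - π_{•}^-`. -/
theorem tensor_differential_koszul
    {G H : Type*} [AddCommGroup G] [AddCommGroup H]
    (π : Bool → ℤ → G →+ G) (ρ : Bool → ℤ → H →+ H)
    (hπneg : ∀ (ε : Bool) (k : ℤ), k < 0 → π ε k = 0)
    (hρneg : ∀ (ε : Bool) (k : ℤ), k < 0 → ρ ε k = 0)
    (hπlt : ∀ (ε δ : Bool) (i j : ℤ), i < j → ∀ x, π ε i (π δ j x) = π ε i x)
    (hπle : ∀ (ε δ : Bool) (i j : ℤ), j ≤ i → ∀ x, π ε i (π δ j x) = π δ j x)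
    (hρlt : ∀ (ε δ : Bool) (i j : ℤ), i < j → ∀ y, ρ ε i (ρ δ j y) = ρ ε i y)
    (hρle : ∀ (ε δ : Bool) (i j : ℤ), j ≤ i → ∀ y, ρ ε i (ρ δ j y) = ρ δ j y)
    (hπar : ∀ x : G, ∃ n : ℤ, π true n x = x)
    (hρar : ∀ y : H, ∃ n : ℤ, ρ true n y = y)
    (πT : Bool → ℤ → G ⊗[ℤ] H → G ⊗[ℤ] H)
    (hTadd : ∀ (ε : Bool) (n : ℤ) (a b : G ⊗[ℤ] H),
      πT ε n (a + b) = πT ε n a + πT ε n b)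
    (hTdef : ∀ (ε : Bool) (n : ℤ) (g : G) (h : H),
      πT ε n (g ⊗ₜ[ℤ] h) =
        ∑ᶠ k : ℤ, (π ε k g - π ε (k - 1) g) ⊗ₜ[ℤ] ρ (sflip k ε) (n - k) h)
    (i j : ℤ) (hi : 0 ≤ i) (hj : 0 ≤ j)
    (g : G) (h : H) (hg : π true i g = g) (hh : ρ true j h = h) :
    ∃ w : G ⊗[ℤ] H, πT true (i + j - 2) w = w ∧
      πT true (i + j - 1) (g ⊗ₜ[ℤ] h) - πT false (i + j - 1) (g ⊗ₜ[ℤ] h) =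
        (π true (i - 1) g - π false (i - 1) g) ⊗ₜ[ℤ] h +
          ((-1 : ℤ) ^ i.toNat) •
            (g ⊗ₜ[ℤ] (ρ true (j - 1) h - ρ false (j - 1) h)) + w :=
  tensor_differential_koszul_general π ρ hπneg hπle hρle πT hTadd hTdef i j hi g h hg hh
end

section
/- Let G be a globular group corresponding to a chain complex (K_n, ∂) (K_n = PG_n). Then G is isomorphic, as a globular group, to the group of eventually-zero double sequences (k_n^-, k_n^+) ∈ K_n × K_n satisfying ∂(k_n^ε) = k_{n-1}^+ - k_{n-1}^- for all n and ε, with structure maps π_n^ε sending the sequence (..., (k_m^-,k_m^+), ...) to the sequence that is zero above level n, has (k_n^ε, k_n^ε) at level n, and agrees with the original below level n. The isomorphism sends g ∈ G to the sequence of classes (π_n^-(g) mod G_{n-1}, π_n^+(g) mod G_{n-1}). -/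
/-- The quotient `G / G_{n-1}` of a globular group, in which the classes
`π_n^ε(g) mod G_{n-1}` live (`PG_n = G_n/G_{n-1}` is its image of `G_n`). -/
abbrev GlobQn {G : Type*} [AddCommGroup G] (π : Bool → ℤ → G →+ G) (n : ℤ) :=
  G ⧸ (π true (n - 1)).range

/-- The map sending `g` to its double sequence of boundary classes
`(π_n^-(g) mod G_{n-1}, π_n^+(g) mod G_{n-1})`. -/
def globPhi {G : Type*} [AddCommGroup G] (π : Bool → ℤ → G →+ G) (g : G)
    (n : ℤ) (ε : Bool) : GlobQn π n :=
  QuotientAddGroup.mk (π ε n g)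

/-- Steiner's double sequences associated to the chain complex of a globular group:
eventually zero sequences with all components classes of `n`-arrows, satisfying
`∂(k_n^ε) = k_{n-1}^+ - k_{n-1}^-`. -/
def IsSteinerSeq {G : Type*} [AddCommGroup G] (π : Bool → ℤ → G →+ G)
    (f : ∀ n : ℤ, Bool → GlobQn π n) : Prop :=
  (∀ (n : ℤ) (ε : Bool), ∃ x : G, π true n x = x ∧
      (QuotientAddGroup.mk x : GlobQn π n) = f n ε) ∧
  (∃ N : ℤ, ∀ n ≥ N, ∀ ε, f n ε = 0) ∧
  (∀ (n : ℤ) (ε : Bool) (x : G), π true n x = x →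
      (QuotientAddGroup.mk x : GlobQn π n) = f n ε →
      (QuotientAddGroup.mk (π true (n - 1) x - π false (n - 1) x) :
          GlobQn π (n - 1)) = f (n - 1) true - f (n - 1) false)

/-- The globular structure on double sequences: `π_m^δ` truncates above level `m`,
puts `(k_m^δ, k_m^δ)` at level `m`, and keeps lower levels. -/
def steinerPi {G : Type*} [AddCommGroup G] (π : Bool → ℤ → G →+ G)
    (δ : Bool) (m : ℤ) (f : ∀ n : ℤ, Bool → GlobQn π n) :
    ∀ n : ℤ, Bool → GlobQn π n :=
  fun n ε =>
    if m < n then 0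
    else if h : n = m then cast (congrArg (fun k => GlobQn π k) h).symm (f m δ)
    else f n ε

/-!
The map `g ↦ (π_n^ε g mod G_{n-1})` is additive, and the globular relations make the class of
`π_{n-1}^+ x - π_{n-1}^- x` depend only on the class of `x` mod `G_{n-1}`, which gives the
boundary condition. For injectivity, if all classes of `z` vanish then `π_{n+1}^+ z ∈ G_n`, and
applying `π_n^+` gives `π_{n+1}^+ z = π_n^+ z`; so by induction from the negative levels every
`π_n^+ z` is zero. For surjectivity a preimage is built level by level: if the `n`-arrow `g`
realises the sequence up to level `n`, and `x` is an `(n+1)`-arrow representing `k_{n+1}^+`,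
then `g + x - π_n^+ x` realises it up to level `n + 1`, the boundary condition on `x` producing
the right class `k_n^-` at level `n`. Eventual vanishing stops the induction.
-/

structure IsGlobular_s10 {G : Type*} [AddCommGroup G] (π : Bool → ℤ → G →+ G) : Prop where
  map_map_of_lt : ∀ (ε δ : Bool) (i j : ℤ), i < j → ∀ x, π ε i (π δ j x) = π ε i x
  map_map_of_le : ∀ (ε δ : Bool) (i j : ℤ), j ≤ i → ∀ x, π ε i (π δ j x) = π δ j x

section

variable {G : Type*} [AddCommGroup G] {π : Bool → ℤ → G →+ G}

theorem globPhi_zero (n : ℤ) (ε : Bool) : globPhi π 0 n ε = 0 := by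
  simp only [globPhi, map_zero, QuotientAddGroup.mk_zero]

theorem globPhi_add (g g' : G) (n : ℤ) (ε : Bool) :
    globPhi π (g + g') n ε = globPhi π g n ε + globPhi π g' n ε := by
  simp only [globPhi, map_add, QuotientAddGroup.mk_add]

theorem globPhi_sub (g g' : G) (n : ℤ) (ε : Bool) :
    globPhi π (g - g') n ε = globPhi π g n ε - globPhi π g' n ε := by
  simp only [globPhi, map_sub, QuotientAddGroup.mk_sub]

theorem steinerPi_of_lt {δ : Bool} {m n : ℤ} (h : m < n) (f : ∀ n : ℤ, Bool → GlobQn π n)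
    (ε : Bool) : steinerPi π δ m f n ε = 0 :=
  if_pos h

theorem steinerPi_self (δ : Bool) (m : ℤ) (f : ∀ n : ℤ, Bool → GlobQn π n) (ε : Bool) :
    steinerPi π δ m f m ε = f m δ := by
  simp [steinerPi]

theorem steinerPi_of_gt {δ : Bool} {m n : ℤ} (h : n < m) (f : ∀ n : ℤ, Bool → GlobQn π n)
    (ε : Bool) : steinerPi π δ m f n ε = f n ε := by
  rw [steinerPi, if_neg h.not_gt, dif_neg h.ne]

theorem IsSteinerSeq.eq_zero_of_neg {f : ∀ n : ℤ, Bool → GlobQn π n} (hf : IsSteinerSeq π f)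
    (hneg : ∀ (ε : Bool) (k : ℤ), k < 0 → π ε k = 0) {m : ℤ} (hm : m < 0) (ε : Bool) :
    f m ε = 0 := by
  obtain ⟨x, hx, hxf⟩ := hf.1 m ε
  rw [hneg true m hm, AddMonoidHom.zero_apply] at hx
  rw [← hxf, ← hx, QuotientAddGroup.mk_zero]

end

def LiftsUpTo {G : Type*} [AddCommGroup G] (π : Bool → ℤ → G →+ G)
    (f : ∀ n : ℤ, Bool → GlobQn π n) (n : ℤ) (g : G) : Prop :=
  π true n g = g ∧ (QuotientAddGroup.mk g : GlobQn π n) = f n true ∧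
    ∀ m < n, ∀ ε, globPhi π g m ε = f m ε

namespace IsGlobular_s10

variable {G : Type*} [AddCommGroup G] {π : Bool → ℤ → G →+ G}
  {f : ∀ n : ℤ, Bool → GlobQn π n}

theorem map_apply_of_le (hπ : IsGlobular_s10 π) (ε : Bool) {i j : ℤ} (hji : j ≤ i) {x : G}
    (hx : π true j x = x) : π ε i x = x := by
  rw [← hx, hπ.map_map_of_le ε true i j hji]

theorem map_apply_of_mem_range (hπ : IsGlobular_s10 π) (δ : Bool) {k : ℤ} {x : G}
    (hx : x ∈ (π true k).range) : π δ k x = x := by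
  obtain ⟨y, rfl⟩ := hx
  exact hπ.map_map_of_le δ true k k le_rfl y

theorem globPhi_eq_zero_of_lt (hπ : IsGlobular_s10 π) {j n : ℤ} (hjn : j < n) {x : G}
    (hx : π true j x = x) (ε : Bool) : globPhi π x n ε = 0 := by
  rw [globPhi, QuotientAddGroup.eq_zero_iff, hπ.map_apply_of_le ε hjn.le hx]
  exact ⟨x, hπ.map_apply_of_le true (by omega) hx⟩

theorem globPhi_map (hπ : IsGlobular_s10 π) (g : G) (δ : Bool) (m n : ℤ) (ε : Bool) :
    globPhi π (π δ m g) n ε = steinerPi π δ m (globPhi π g) n ε := by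
  rcases lt_trichotomy m n with h | rfl | h
  · rw [steinerPi_of_lt h]
    exact hπ.globPhi_eq_zero_of_lt h (hπ.map_map_of_le true δ m m le_rfl g) ε
  · rw [steinerPi_self, globPhi, globPhi, hπ.map_map_of_le ε δ m m le_rfl]
  · rw [steinerPi_of_gt h, globPhi, globPhi, hπ.map_map_of_lt ε δ n m h]

theorem map_sub_map_eq_of_mk_eq (hπ : IsGlobular_s10 π) {n : ℤ} {x y : G}
    (h : (QuotientAddGroup.mk x : GlobQn π n) = QuotientAddGroup.mk y) :
    π true (n - 1) x - π false (n - 1) x = π true (n - 1) y - π false (n - 1) y := by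
  have hxy := QuotientAddGroup.eq_iff_sub_mem.mp h
  rw [sub_eq_sub_iff_sub_eq_sub, ← map_sub, ← map_sub, hπ.map_apply_of_mem_range true hxy,
    hπ.map_apply_of_mem_range false hxy]

theorem isSteinerSeq_globPhi (hπ : IsGlobular_s10 π)
    (harrow : ∀ x : G, ∃ n : ℤ, π true n x = x) (g : G) : IsSteinerSeq π (globPhi π g) := by
  refine ⟨fun n ε => ⟨π ε n g, hπ.map_map_of_le true ε n n le_rfl g, rfl⟩, ?_, ?_⟩
  · obtain ⟨N, hN⟩ := harrow g
    exact ⟨N + 1, fun n hn ε => hπ.globPhi_eq_zero_of_lt (by omega) hN ε⟩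
  · intro n ε x _ hx
    rw [globPhi, globPhi, ← QuotientAddGroup.mk_sub, hπ.map_sub_map_eq_of_mk_eq hx,
      hπ.map_map_of_lt true ε (n - 1) n (by omega),
      hπ.map_map_of_lt false ε (n - 1) n (by omega)]

theorem map_eq_zero_of_globPhi_eq_zero (hπ : IsGlobular_s10 π)
    (hneg : ∀ (ε : Bool) (k : ℤ), k < 0 → π ε k = 0) {z : G}
    (hz : ∀ n, globPhi π z n true = 0) {n : ℤ} (hn : -1 ≤ n) : π true n z = 0 := by
  induction n, hn using Int.leInduction with
  | base => rw [hneg true (-1) (by omega), AddMonoidHom.zero_apply]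
  | succ n _ ih =>
    have hmem := (QuotientAddGroup.eq_zero_iff _).mp (hz (n + 1))
    rw [add_sub_cancel_right] at hmem
    rw [← hπ.map_apply_of_mem_range true hmem,
      hπ.map_map_of_lt true true n (n + 1) (by omega), ih]

theorem globPhi_injective (hπ : IsGlobular_s10 π)
    (hneg : ∀ (ε : Bool) (k : ℤ), k < 0 → π ε k = 0)
    (harrow : ∀ x : G, ∃ n : ℤ, π true n x = x) {g g' : G}
    (h : ∀ (n : ℤ) (ε : Bool), globPhi π g n ε = globPhi π g' n ε) : g = g' := by
  obtain ⟨N, hN⟩ := harrow (g - g')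
  have hz : ∀ n, globPhi π (g - g') n true = 0 := fun n => by
    rw [globPhi_sub, h, sub_self]
  rw [← sub_eq_zero, ← hπ.map_apply_of_le true (le_max_left N (-1)) hN]
  exact hπ.map_eq_zero_of_globPhi_eq_zero hneg hz (le_max_right N (-1))

theorem globPhi_add_sub_of_lt (hπ : IsGlobular_s10 π) (g x : G) {m n : ℤ} (h : m < n) (ε : Bool) :
    globPhi π (g + x - π true n x) m ε = globPhi π g m ε := by
  rw [globPhi, globPhi, map_sub, map_add, hπ.map_map_of_lt ε true m n h, add_sub_cancel_right]

theorem map_add_sub_self (hπ : IsGlobular_s10 π) {n : ℤ} {g : G} (hg : π true n g = g) (x : G)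
    (ε : Bool) : π ε n (g + x - π true n x) = g - (π true n x - π ε n x) := by
  rw [map_sub, map_add, hπ.map_apply_of_le ε le_rfl hg, hπ.map_map_of_le ε true n n le_rfl]
  abel

theorem liftsUpTo_of_pred (hπ : IsGlobular_s10 π) (hf : IsSteinerSeq π f) {n : ℤ} {g : G}
    (hg : LiftsUpTo π f (n - 1) g) : ∃ g', LiftsUpTo π f n g' := by
  obtain ⟨hgn, hgf, hlow⟩ := hg
  obtain ⟨x, hx, hxf⟩ := hf.1 n true
  refine ⟨g + x - π true (n - 1) x, ?_, ?_, fun m hm ε => ?_⟩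
  · rw [map_sub, map_add, hπ.map_apply_of_le true (by omega) hgn, hx,
      hπ.map_map_of_le true true n (n - 1) (by omega)]
  · rw [← hxf, QuotientAddGroup.eq_iff_sub_mem, add_sub_right_comm, add_sub_cancel_right]
    exact ⟨g - π true (n - 1) x, by
      rw [map_sub, hgn, hπ.map_map_of_le true true (n - 1) (n - 1) le_rfl]⟩
  · rcases (Int.le_sub_one_iff.mpr hm).lt_or_eq with hmn | rfl
    · rw [hπ.globPhi_add_sub_of_lt g x hmn, hlow m hmn]
    · have hbd : (QuotientAddGroup.mk (π true (n - 1) x - π ε (n - 1) x) : GlobQn π (n - 1)) =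
          f (n - 1) true - f (n - 1) ε := by
        cases ε
        · exact hf.2.2 n true x hx hxf
        · rw [sub_self, sub_self, QuotientAddGroup.mk_zero]
      rw [globPhi, hπ.map_add_sub_self hgn, QuotientAddGroup.mk_sub, hgf, hbd, sub_sub_cancel]

theorem liftsUpTo_of_le (hπ : IsGlobular_s10 π) (hf : IsSteinerSeq π f)
    (hneg : ∀ (ε : Bool) (k : ℤ), k < 0 → π ε k = 0) {n : ℤ} (hn : -1 ≤ n) :
    ∃ g, LiftsUpTo π f n g := by
  induction n, hn using Int.leInduction with
  | base =>
    refine ⟨0, map_zero _, ?_, fun m hm ε => ?_⟩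
    · rw [hf.eq_zero_of_neg hneg (by omega), QuotientAddGroup.mk_zero]
    · rw [globPhi_zero, hf.eq_zero_of_neg hneg (by omega)]
  | succ n _ ih =>
    rw [← add_sub_cancel_right n 1] at ih
    obtain ⟨g, hg⟩ := ih
    exact hπ.liftsUpTo_of_pred hf hg

theorem exists_globPhi_eq (hπ : IsGlobular_s10 π)
    (hneg : ∀ (ε : Bool) (k : ℤ), k < 0 → π ε k = 0)
    (hf : IsSteinerSeq π f) : ∃ g : G, ∀ (n : ℤ) (ε : Bool), globPhi π g n ε = f n ε := by
  obtain ⟨N, hN⟩ := hf.2.1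
  set n := max N (-1)
  obtain ⟨g, -, hgf, hlow⟩ := hπ.liftsUpTo_of_le hf hneg (le_max_right N (-1))
  have hg : π true (n - 1) g = g := by
    refine hπ.map_apply_of_mem_range true ((QuotientAddGroup.eq_zero_iff g).mp ?_)
    rw [hgf, hN n (le_max_left N (-1))]
  refine ⟨g, fun m ε => ?_⟩
  rcases lt_or_ge m n with hm | hm
  · exact hlow m hm ε
  · rw [hπ.globPhi_eq_zero_of_lt (by omega) hg ε, hN m (le_trans (le_max_left N (-1)) hm)]

end IsGlobular_s10

/-- A globular group is isomorphic, as a globular group, to the group of Steiner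
double sequences of its chain complex, via `g ↦ (π_n^-(g) mod G_{n-1}, π_n^+(g) mod G_{n-1})`:
this map lands in the Steiner sequences, is additive, injective, surjective onto them,
and intertwines the globular structures. -/
theorem globular_group_steiner_description
    {G : Type*} [AddCommGroup G] (π : Bool → ℤ → G →+ G)
    (hneg : ∀ (ε : Bool) (k : ℤ), k < 0 → π ε k = 0)
    (hglob_lt : ∀ (ε δ : Bool) (i j : ℤ), i < j → ∀ x, π ε i (π δ j x) = π ε i x)
    (hglob_le : ∀ (ε δ : Bool) (i j : ℤ), j ≤ i → ∀ x, π ε i (π δ j x) = π δ j x)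
    (harrow : ∀ x : G, ∃ n : ℤ, π true n x = x) :
    (∀ g : G, IsSteinerSeq π (globPhi π g)) ∧
    (∀ (g g' : G) (n : ℤ) (ε : Bool),
        globPhi π (g + g') n ε = globPhi π g n ε + globPhi π g' n ε) ∧
    (∀ g g' : G, (∀ (n : ℤ) (ε : Bool), globPhi π g n ε = globPhi π g' n ε) → g = g') ∧
    (∀ f : ∀ n : ℤ, Bool → GlobQn π n, IsSteinerSeq π f →
        ∃ g : G, ∀ (n : ℤ) (ε : Bool), globPhi π g n ε = f n ε) ∧
    (∀ (g : G) (δ : Bool) (m n : ℤ) (ε : Bool),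
        globPhi π (π δ m g) n ε = steinerPi π δ m (globPhi π g) n ε) := by
  have hπ : IsGlobular_s10 π := ⟨hglob_lt, hglob_le⟩
  exact ⟨hπ.isSteinerSeq_globPhi harrow, globPhi_add,
    fun _ _ => hπ.globPhi_injective hneg harrow, fun _ => hπ.exists_globPhi_eq hneg,
    hπ.globPhi_map⟩
end

section
/- In the Gray tensor product D_n ⊗ D_m of disks, the map v: ℤD_{n+m} → ℤD_n ⊗ ℤD_m sending the top generator [n+m] to [n] ⊗ [m] (and [i^ε] to π_i^ε([n] ⊗ [m])) preserves the alternating sum σ and sends alternate-positive elements to alternate-positive elements. Explicitly, v([i^ε]) = Σ_{a+b=i, a≤n, b≤m} [a^ε] ⊗ [b^{(-1)^a ε}] - Σ_{a+b=i-1, a<n, b<m} [a^ε] ⊗ [b^{-(-1)^a ε}], and v(σ_{D_{n+m}}) = σ_{D_n ⊗ D_m}, where each basis element of ℤD_n ⊗ ℤD_m appears exactly once with sign (-1)^{its dimension}. -/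
open scoped TensorProduct

/-- Generators of the `k`-disk polygraph `D_k`: the cells `[i^ε]` for `i < k`
(`Sum.inl (i, ε)`) and the top cell `[k]` (`Sum.inr ()`). -/
abbrev DCell (k : ℕ) : Type := (Fin k × Bool) ⊕ Unit

/-- Dimension of a generator of `D_k`. -/
def dimD {k : ℕ} : DCell k → ℕ
  | .inl (i, _) => i
  | .inr _ => k

/-- `ℤD_k`, the free abelian group on the generators of `D_k`. -/
abbrev ZD (k : ℕ) := DCell k →₀ ℤ

/-- The basis element of `ℤD_k` given by a generator. -/
noncomputable def genD {k : ℕ} (c : DCell k) : ZD k := Finsupp.single c 1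

/-- `[a^ε]` for `a ≤ k`: the generator `(a, ε)` if `a < k`, the top cell if `a ≥ k`. -/
noncomputable def basD (k : ℕ) (a : ℕ) (ε : Bool) : ZD k :=
  if h : a < k then genD (Sum.inl (⟨a, h⟩, ε)) else genD (Sum.inr ())

/-- The sign `(-1)^a ε`. -/
def sflipN (a : ℕ) (ε : Bool) : Bool := if Even a then ε else !ε

/-- The generator of `D_k` indexed by `a ≤ k` (top cell if `a ≥ k`). -/
def iotaD (k a : ℕ) (ε : Bool) : DCell k :=
  if h : a < k then Sum.inl (⟨a, h⟩, ε) else Sum.inr ()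

lemma basD_def (k a : ℕ) (ε : Bool) : basD k a ε = Finsupp.single (iotaD k a ε) 1 := by
  unfold basD iotaD genD; split <;> rfl

lemma basD_apply (k a : ℕ) (ε : Bool) (c : DCell k) :
    basD k a ε c = if iotaD k a ε = c then 1 else 0 := by
  rw [basD_def, Finsupp.single_apply]

lemma genD_apply {k : ℕ} (c' c : DCell k) : genD c' c = if c' = c then 1 else 0 :=
  Finsupp.single_apply

lemma dimD_inl {k : ℕ} (j : Fin k) (ε : Bool) : dimD (Sum.inl (j, ε) : DCell k) = (j : ℕ) := rfl

lemma dimD_inr {k : ℕ} : dimD (Sum.inr () : DCell k) = k := rfl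

lemma dimD_le {k : ℕ} (c : DCell k) : dimD c ≤ k := by
  rcases c with ⟨j, ε⟩ | ⟨⟩
  · exact le_of_lt j.isLt
  · exact le_rfl

lemma dimD_iotaD {k a : ℕ} (h : a ≤ k) (ε : Bool) : dimD (iotaD k a ε) = a := by
  unfold iotaD; split
  · rfl
  · show k = a; omega

lemma iotaD_eq_inl_iff {k : ℕ} {a : ℕ} {ε : Bool} {j : Fin k} {δ : Bool} :
    iotaD k a ε = Sum.inl (j, δ) ↔ a = (j : ℕ) ∧ ε = δ := by
  unfold iotaD; split
  · simp [Fin.ext_iff]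
  · constructor
    · intro h; cases h
    · rintro ⟨rfl, rfl⟩; exact absurd j.isLt (by assumption)

lemma iotaD_eq_inr_iff {k : ℕ} {a : ℕ} {ε : Bool} :
    iotaD k a ε = Sum.inr () ↔ k ≤ a := by
  unfold iotaD; split
  · simp; omega
  · simp; omega

lemma sflipN_succ (a : ℕ) (ε : Bool) : sflipN (a+1) ε = !sflipN a ε := by
  simp only [sflipN, Nat.even_add_one]
  by_cases h : Even a <;> simp [h]

lemma sumA (n m i : ℕ) (ε : Bool) (c : DCell n) (d : DCell m) :
    (∑ a ∈ (Finset.range (i+1)).filter (fun a => a ≤ n ∧ i - a ≤ m),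
      basD n a ε c * basD m (i - a) (sflipN a ε) d)
    = if (iotaD n (dimD c) ε = c ∧ iotaD m (dimD d) (sflipN (dimD c) ε) = d) ∧ dimD c + dimD d = i
      then 1 else 0 := by
  split_ifs with h
  · obtain ⟨⟨h1, h2⟩, h3⟩ := h
    have hcn := dimD_le c
    have hdm := dimD_le d
    rw [Finset.sum_eq_single_of_mem (dimD c)]
    · rw [basD_apply, basD_apply, if_pos h1]
      have e : i - dimD c = dimD d := by omega
      rw [e, if_pos h2]; norm_num
    · simp only [Finset.mem_filter, Finset.mem_range]
      exact ⟨by omega, hcn, by omega⟩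
    · intro a ha hne
      rw [basD_apply, if_neg, zero_mul]
      intro hiota
      apply hne
      have han : a ≤ n := (Finset.mem_filter.mp ha).2.1
      have := dimD_iotaD han ε
      rw [hiota] at this
      omega
  · apply Finset.sum_eq_zero; intro a ha
    simp only [Finset.mem_filter, Finset.mem_range] at ha
    rw [basD_apply, basD_apply]
    by_cases h1 : iotaD n a ε = c
    · by_cases h2 : iotaD m (i - a) (sflipN a ε) = d
      · exfalso; apply h
        have hda : dimD c = a := by rw [← h1, dimD_iotaD ha.2.1]
        have hdb : dimD d = i - a := by rw [← h2, dimD_iotaD ha.2.2]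
        refine ⟨⟨by rw [hda]; exact h1, by rw [hda, hdb]; exact h2⟩, by omega⟩
      · rw [if_neg h2, mul_zero]
    · rw [if_neg h1, zero_mul]

lemma sumB (n m i : ℕ) (ε : Bool) (c : DCell n) (d : DCell m) :
    (∑ a ∈ (Finset.range i).filter (fun a => a < n ∧ i - 1 - a < m),
      basD n a ε c * basD m (i - 1 - a) (!sflipN a ε) d)
    = if (iotaD n (dimD c) ε = c ∧ iotaD m (dimD d) (!sflipN (dimD c) ε) = d
          ∧ dimD c < n ∧ dimD d < m) ∧ dimD c + dimD d + 1 = i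
      then 1 else 0 := by
  split_ifs with h
  · obtain ⟨⟨h1, h2, h3, h4⟩, h5⟩ := h
    rw [Finset.sum_eq_single_of_mem (dimD c)]
    · rw [basD_apply, basD_apply, if_pos h1]
      have e : i - 1 - dimD c = dimD d := by omega
      rw [e, if_pos h2]; norm_num
    · simp only [Finset.mem_filter, Finset.mem_range]
      exact ⟨by omega, h3, by omega⟩
    · intro a ha hne
      rw [basD_apply, if_neg, zero_mul]
      intro hiota
      apply hne
      have han : a < n := (Finset.mem_filter.mp ha).2.1
      have := dimD_iotaD (le_of_lt han) ε
      rw [hiota] at this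
      omega
  · apply Finset.sum_eq_zero; intro a ha
    simp only [Finset.mem_filter, Finset.mem_range] at ha
    rw [basD_apply, basD_apply]
    by_cases h1 : iotaD n a ε = c
    · by_cases h2 : iotaD m (i - 1 - a) (!sflipN a ε) = d
      · exfalso; apply h
        have hda : dimD c = a := by rw [← h1, dimD_iotaD (le_of_lt ha.2.1)]
        have hdb : dimD d = i - 1 - a := by rw [← h2, dimD_iotaD (le_of_lt ha.2.2)]
        refine ⟨⟨by rw [hda]; exact h1, by rw [hda, hdb]; exact h2, by omega, by omega⟩, by omega⟩
      · rw [if_neg h2, mul_zero]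
    · rw [if_neg h1, zero_mul]

lemma sum_fin_ite {N : ℕ} (i0 : ℕ) (P : Prop) [Decidable P] (f : ℕ → ℤ) :
    (∑ i : Fin N, if P ∧ i0 = (i : ℕ) then f (i : ℕ) else 0)
    = if P ∧ i0 < N then f i0 else 0 := by
  by_cases hP : P
  · simp only [hP, true_and]
    by_cases hi : i0 < N
    · rw [if_pos hi, Finset.sum_eq_single_of_mem (⟨i0, hi⟩ : Fin N) (Finset.mem_univ _)]
      · simp
      · intro b _ hb
        rw [if_neg]
        intro h
        exact hb (Fin.ext h.symm)
    · rw [if_neg hi]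
      apply Finset.sum_eq_zero
      intro b _
      rw [if_neg]
      intro h
      exact hi (h ▸ b.isLt)
  · simp [hP]

/-- The per-coefficient integer identity underlying preservation of `σ`. -/
lemma coreid (n m : ℕ) (c : DCell n) (d : DCell m) :
    (∑ i : Fin (n + m), ∑ ε : Bool, (-1 : ℤ) ^ (i : ℕ) *
      ((if (iotaD n (dimD c) ε = c ∧ iotaD m (dimD d) (sflipN (dimD c) ε) = d)
            ∧ dimD c + dimD d = (i : ℕ) then 1 else 0)
        - (if (iotaD n (dimD c) ε = c ∧ iotaD m (dimD d) (!sflipN (dimD c) ε) = d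
            ∧ dimD c < n ∧ dimD d < m) ∧ dimD c + dimD d + 1 = (i : ℕ) then 1 else 0)))
    + (-1 : ℤ) ^ (n + m) * (genD (Sum.inr () : DCell n) c * genD (Sum.inr () : DCell m) d)
    = (-1 : ℤ) ^ (dimD c + dimD d) := by
  rw [Finset.sum_comm]
  have step : ∀ ε : Bool, (∑ i : Fin (n + m), (-1 : ℤ) ^ (i : ℕ) *
      ((if (iotaD n (dimD c) ε = c ∧ iotaD m (dimD d) (sflipN (dimD c) ε) = d)
            ∧ dimD c + dimD d = (i : ℕ) then 1 else 0)
        - (if (iotaD n (dimD c) ε = c ∧ iotaD m (dimD d) (!sflipN (dimD c) ε) = d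
            ∧ dimD c < n ∧ dimD d < m) ∧ dimD c + dimD d + 1 = (i : ℕ) then 1 else 0)))
      = (if (iotaD n (dimD c) ε = c ∧ iotaD m (dimD d) (sflipN (dimD c) ε) = d)
            ∧ dimD c + dimD d < n + m then (-1 : ℤ) ^ (dimD c + dimD d) else 0)
        - (if (iotaD n (dimD c) ε = c ∧ iotaD m (dimD d) (!sflipN (dimD c) ε) = d
            ∧ dimD c < n ∧ dimD d < m) ∧ dimD c + dimD d + 1 < n + m
            then (-1 : ℤ) ^ (dimD c + dimD d + 1) else 0) := by
    intro ε
    rw [← sum_fin_ite (dimD c + dimD d) _ (fun t => (-1 : ℤ) ^ t),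
        ← sum_fin_ite (dimD c + dimD d + 1) _ (fun t => (-1 : ℤ) ^ t),
        ← Finset.sum_sub_distrib]
    refine Finset.sum_congr rfl fun i _ => ?_
    rw [mul_sub, mul_ite, mul_one, mul_zero, mul_ite, mul_one, mul_zero]
  simp only [step]
  clear step
  have sflipN_tf : ∀ a : ℕ, sflipN a true = !sflipN a false := by
    intro a; by_cases h : Even a <;> simp [sflipN, h]
  rcases c with ⟨j, ε0⟩ | u <;> rcases d with ⟨k, δ0⟩ | u'
  · -- inl inl
    have hj := j.isLt
    have hk := k.isLt
    have h1 : (j : ℕ) + (k : ℕ) < n + m := by omega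
    have h2 : (j : ℕ) + (k : ℕ) + 1 < n + m := by omega
    have h3 : ¬(Sum.inr () = (Sum.inl (j, ε0) : DCell n)) := by simp
    simp only [dimD_inl, iotaD_eq_inl_iff, genD_apply, Fintype.sum_bool, h1, h2, hj, hk,
      h3, and_true, true_and, if_false, if_true, mul_zero, zero_mul, mul_one, add_zero,
      sflipN_tf, eq_self_iff_true]
    rcases ε0 <;> rcases δ0 <;> cases hs : sflipN (j : ℕ) false <;>
      simp [hs, pow_succ]
  · -- inl inr
    cases u'
    have hj := j.isLt
    have h1 : (j : ℕ) + m < n + m := by omega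
    have h2 : ¬(m < m) := lt_irrefl m
    have h3 : ¬(Sum.inr () = (Sum.inl (j, ε0) : DCell n)) := by simp
    simp only [dimD_inl, dimD_inr, iotaD_eq_inl_iff, iotaD_eq_inr_iff, genD_apply,
      h1, h2, h3, le_refl, and_true, true_and, and_false, false_and, if_false, if_true,
      mul_zero, zero_mul, add_zero, sub_zero, Fintype.sum_bool]
    rcases ε0 <;> simp
  · -- inr inl
    cases u
    have hk := k.isLt
    have h1 : n + (k : ℕ) < n + m := by omega
    have h2 : ¬(n < n) := lt_irrefl n
    have h3 : ¬(Sum.inr () = (Sum.inl (k, δ0) : DCell m)) := by simp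
    simp only [dimD_inl, dimD_inr, iotaD_eq_inl_iff, iotaD_eq_inr_iff, genD_apply,
      h1, h2, h3, le_refl, and_true, true_and, and_false, false_and, if_false, if_true,
      mul_zero, zero_mul, add_zero, sub_zero, Fintype.sum_bool, sflipN_tf]
    cases hs : sflipN n false <;> rcases δ0 <;> simp [hs, pow_succ]
  · -- inr inr
    cases u; cases u'
    have h1 : ¬(n + m < n + m) := lt_irrefl _
    have h2 : ¬(n < n) := lt_irrefl n
    simp [dimD_inr, iotaD_eq_inr_iff, genD_apply, h1, h2]

/-- In `D_n ⊗ D_m`, the map `v : ℤD_{n+m} → ℤD_n ⊗ ℤD_m` sending the top generator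
to `[n] ⊗ [m]` (and `[i^ε]` to `π_i^ε([n] ⊗ [m])`) is given by the explicit formula
`v([i^ε]) = Σ_{a+b=i, a≤n, b≤m} [a^ε] ⊗ [b^{(-1)^a ε}]
          - Σ_{a+b=i-1, a<n, b<m} [a^ε] ⊗ [b^{-(-1)^a ε}]`,
it preserves the alternating sum `σ`, and it sends alternate-positive elements to
alternate-positive elements. -/
theorem disk_tensor_preserves_sigma_and_alternate_positivity
    (n m : ℕ)
    -- the globular structure of the linearized disks, on basis elements
    (πD : ∀ k : ℕ, Bool → ℕ → ZD k →+ ZD k)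
    (hπD : ∀ (k : ℕ) (ε δ : Bool) (i : ℕ) (j : Fin k),
      πD k ε i (genD (Sum.inl (j, δ))) =
        if h : i < (j : ℕ) then genD (Sum.inl (⟨i, h.trans j.isLt⟩, ε))
        else genD (Sum.inl (j, δ)))
    (hπDtop : ∀ (k : ℕ) (ε : Bool) (i : ℕ),
      πD k ε i (genD (Sum.inr () : DCell k)) =
        if h : i < k then genD (Sum.inl (⟨i, h⟩, ε)) else genD (Sum.inr ()))
    -- the tensor product globular structure on `ℤD_n ⊗ ℤD_m`
    (πT : Bool → ℕ → ZD n ⊗[ℤ] ZD m → ZD n ⊗[ℤ] ZD m)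
    (hTadd : ∀ (ε : Bool) (r : ℕ) (a b : ZD n ⊗[ℤ] ZD m),
      πT ε r (a + b) = πT ε r a + πT ε r b)
    (hTdef : ∀ (ε : Bool) (r : ℕ) (x : ZD n) (y : ZD m),
      πT ε r (x ⊗ₜ[ℤ] y) =
        ∑ a ∈ Finset.range (r + 1),
          (πD n ε a x - (if a = 0 then 0 else πD n ε (a - 1) x)) ⊗ₜ[ℤ]
            πD m (sflipN a ε) (r - a) y)
    -- the map `v = (top cell of D_n ⊗ D_m) : ℤD_{n+m} → ℤD_n ⊗ ℤD_m`
    (v : ZD (n + m) →+ ZD n ⊗[ℤ] ZD m)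
    (hvtop : v (genD (Sum.inr () : DCell (n + m))) =
      genD (Sum.inr () : DCell n) ⊗ₜ[ℤ] genD (Sum.inr () : DCell m))
    (hvgen : ∀ (i : Fin (n + m)) (ε : Bool),
      v (genD (Sum.inl (i, ε))) =
        πT ε i (genD (Sum.inr () : DCell n) ⊗ₜ[ℤ] genD (Sum.inr () : DCell m))) :
    -- explicit formula for the images of the generators
    (∀ (i : Fin (n + m)) (ε : Bool),
      v (genD (Sum.inl (i, ε))) =
        (∑ a ∈ (Finset.range ((i : ℕ) + 1)).filter
              (fun a => a ≤ n ∧ (i : ℕ) - a ≤ m),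
            basD n a ε ⊗ₜ[ℤ] basD m ((i : ℕ) - a) (sflipN a ε)) -
          ∑ a ∈ (Finset.range (i : ℕ)).filter
              (fun a => a < n ∧ (i : ℕ) - 1 - a < m),
            basD n a ε ⊗ₜ[ℤ] basD m ((i : ℕ) - 1 - a) (!(sflipN a ε))) ∧
    -- `v` preserves the alternating sum of generators
    (v (∑ c : DCell (n + m), (-1 : ℤ) ^ dimD c • genD c) =
      ∑ c : DCell n, ∑ d : DCell m,
        (-1 : ℤ) ^ (dimD c + dimD d) • (genD c ⊗ₜ[ℤ] genD d)) ∧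
    -- `v` preserves alternate-positivity
    (∀ x : ZD (n + m), (∀ c : DCell (n + m), 0 ≤ (-1 : ℤ) ^ dimD c * x c) →
      ∀ (c : DCell n) (d : DCell m),
        0 ≤ (-1 : ℤ) ^ (dimD c + dimD d) *
          (finsuppTensorFinsupp' ℤ (DCell n) (DCell m) (v x)) (c, d)) := by
  have hπtop : ∀ (k : ℕ) (ε' : Bool) (j : ℕ),
      πD k ε' j (genD (Sum.inr () : DCell k)) = basD k j ε' := by
    intro k ε' j; rw [hπDtop]; unfold basD; rfl
  have hform : ∀ (i : Fin (n + m)) (ε : Bool),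
      v (genD (Sum.inl (i, ε))) =
        (∑ a ∈ (Finset.range ((i : ℕ) + 1)).filter
              (fun a => a ≤ n ∧ (i : ℕ) - a ≤ m),
            basD n a ε ⊗ₜ[ℤ] basD m ((i : ℕ) - a) (sflipN a ε)) -
          ∑ a ∈ (Finset.range (i : ℕ)).filter
              (fun a => a < n ∧ (i : ℕ) - 1 - a < m),
            basD n a ε ⊗ₜ[ℤ] basD m ((i : ℕ) - 1 - a) (!(sflipN a ε)) := by
    intro i ε
    have hi : (i : ℕ) < n + m := i.isLt
    rw [hvgen, hTdef]
    have e1 : ∀ a ∈ Finset.range ((i : ℕ) + 1),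
        (πD n ε a (genD (Sum.inr ())) -
          (if a = 0 then 0 else πD n ε (a - 1) (genD (Sum.inr ())))) ⊗ₜ[ℤ]
          πD m (sflipN a ε) ((i : ℕ) - a) (genD (Sum.inr ()))
        = basD n a ε ⊗ₜ[ℤ] basD m ((i : ℕ) - a) (sflipN a ε)
          - (if a = 0 then (0 : ZD n ⊗[ℤ] ZD m)
              else basD n (a - 1) ε ⊗ₜ[ℤ] basD m ((i : ℕ) - a) (sflipN a ε)) := by
      intro a _
      rw [hπtop, hπtop, hπtop, TensorProduct.sub_tmul]
      congr 1
      split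
      · exact TensorProduct.zero_tmul _ _
      · rfl
    rw [Finset.sum_congr rfl e1, Finset.sum_sub_distrib]
    have e2 : (∑ a ∈ Finset.range ((i : ℕ) + 1),
        (if a = 0 then (0 : ZD n ⊗[ℤ] ZD m)
          else basD n (a - 1) ε ⊗ₜ[ℤ] basD m ((i : ℕ) - a) (sflipN a ε)))
        = ∑ a ∈ Finset.range (i : ℕ),
            basD n a ε ⊗ₜ[ℤ] basD m ((i : ℕ) - 1 - a) (!(sflipN a ε)) := by
      rw [Finset.sum_range_succ', if_pos rfl, add_zero]
      refine Finset.sum_congr rfl fun a _ => ?_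
      have e3 : (i : ℕ) - (a + 1) = (i : ℕ) - 1 - a := by omega
      rw [if_neg (Nat.succ_ne_zero a), Nat.add_sub_cancel, e3, sflipN_succ]
    rw [e2]
    have key : (∑ a ∈ (Finset.range ((i:ℕ)+1)).filter
            (fun a => ¬(a ≤ n ∧ (i : ℕ) - a ≤ m)),
          basD n a ε ⊗ₜ[ℤ] basD m ((i : ℕ) - a) (sflipN a ε))
        = ∑ a ∈ (Finset.range (i:ℕ)).filter (fun a => ¬(a < n ∧ (i : ℕ) - 1 - a < m)),
            basD n a ε ⊗ₜ[ℤ] basD m ((i : ℕ) - 1 - a) (!(sflipN a ε)) := by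
      have hC1 : (Finset.range ((i:ℕ)+1)).filter (fun a => ¬(a ≤ n ∧ (i : ℕ) - a ≤ m))
          = Finset.Ico (n+1) ((i:ℕ)+1) ∪ Finset.range ((i:ℕ) - m) := by
        ext a
        simp only [Finset.mem_filter, Finset.mem_range, Finset.mem_union, Finset.mem_Ico,
          not_and, not_le]
        omega
      have hC2 : (Finset.range (i:ℕ)).filter (fun a => ¬(a < n ∧ (i : ℕ) - 1 - a < m))
          = Finset.Ico n (i:ℕ) ∪ Finset.range ((i:ℕ) - m) := by
        ext a
        simp only [Finset.mem_filter, Finset.mem_range, Finset.mem_union, Finset.mem_Ico,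
          not_and, not_lt]
        omega
      have hd1 : Disjoint (Finset.Ico (n+1) ((i:ℕ)+1)) (Finset.range ((i:ℕ) - m)) := by
        rw [Finset.disjoint_left]
        intro a ha hb
        simp only [Finset.mem_Ico] at ha
        simp only [Finset.mem_range] at hb
        omega
      have hd2 : Disjoint (Finset.Ico n (i:ℕ)) (Finset.range ((i:ℕ) - m)) := by
        rw [Finset.disjoint_left]
        intro a ha hb
        simp only [Finset.mem_Ico] at ha
        simp only [Finset.mem_range] at hb
        omega
      rw [hC1, hC2, Finset.sum_union hd1, Finset.sum_union hd2]
      congr 1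
      · rw [Finset.sum_Ico_eq_sum_range, Finset.sum_Ico_eq_sum_range]
        have elen : (i:ℕ) + 1 - (n+1) = (i:ℕ) - n := by omega
        rw [elen]
        refine Finset.sum_congr rfl fun a ha => ?_
        simp only [Finset.mem_range] at ha
        have e4 : basD n (n + 1 + a) ε = basD n (n + a) ε := by
          unfold basD
          rw [dif_neg (by omega), dif_neg (by omega)]
        have e5 : (i:ℕ) - (n + 1 + a) = (i:ℕ) - 1 - (n + a) := by omega
        have e6 : sflipN (n + 1 + a) ε = !sflipN (n + a) ε := by
          have e : n + 1 + a = (n + a) + 1 := by omega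
          rw [e, sflipN_succ]
        rw [e4, e5, e6]
      · refine Finset.sum_congr rfl fun a ha => ?_
        simp only [Finset.mem_range] at ha
        have e7 : basD m ((i:ℕ) - a) (sflipN a ε) = basD m ((i:ℕ) - 1 - a) (!sflipN a ε) := by
          unfold basD
          rw [dif_neg (by omega), dif_neg (by omega)]
        rw [e7]
    rw [← Finset.sum_filter_add_sum_filter_not (Finset.range ((i:ℕ)+1))
          (fun a => a ≤ n ∧ (i : ℕ) - a ≤ m),
        ← Finset.sum_filter_add_sum_filter_not (Finset.range (i:ℕ))
          (fun a => a < n ∧ (i : ℕ) - 1 - a < m),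
        key]
    abel
  have hcoeff : ∀ (i : Fin (n+m)) (ε : Bool) (c : DCell n) (d : DCell m),
      finsuppTensorFinsupp' ℤ (DCell n) (DCell m) (v (genD (Sum.inl (i, ε)))) (c, d)
      = (if (iotaD n (dimD c) ε = c ∧ iotaD m (dimD d) (sflipN (dimD c) ε) = d)
            ∧ dimD c + dimD d = (i : ℕ) then 1 else 0)
        - (if (iotaD n (dimD c) ε = c ∧ iotaD m (dimD d) (!sflipN (dimD c) ε) = d
            ∧ dimD c < n ∧ dimD d < m) ∧ dimD c + dimD d + 1 = (i : ℕ) then 1 else 0) := by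
    intro i ε c d
    rw [hform i ε, map_sub, map_sum, map_sum, Finsupp.sub_apply,
        Finsupp.finset_sum_apply, Finsupp.finset_sum_apply]
    simp only [finsuppTensorFinsupp'_apply_apply]
    rw [sumA, sumB]
  refine ⟨hform, ?_, ?_⟩
  · -- preservation of σ
    apply (finsuppTensorFinsupp' ℤ (DCell n) (DCell m)).injective
    ext cd
    obtain ⟨c, d⟩ := cd
    rw [map_sum v]
    simp only [map_zsmul, map_sum, Finsupp.finset_sum_apply, Finsupp.smul_apply,
      smul_eq_mul, finsuppTensorFinsupp'_apply_apply]
    rw [Fintype.sum_sum_type, Fintype.sum_prod_type]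
    simp only [hcoeff, hvtop, finsuppTensorFinsupp'_apply_apply, dimD_inl, dimD_inr]
    have hRHS : (∑ c' : DCell n, ∑ d' : DCell m,
        (-1 : ℤ) ^ (dimD c' + dimD d') * (genD c' c * genD d' d))
        = (-1 : ℤ) ^ (dimD c + dimD d) := by
      simp only [genD_apply, mul_ite, mul_one, mul_zero, ite_mul, zero_mul,
        Finset.sum_ite_eq', Finset.mem_univ, if_true]
    rw [hRHS]
    simp only [Finset.univ_unique, Finset.sum_singleton]
    exact coreid n m c d
  · -- preservation of alternate-positivity
    intro x hx c d
    have hK1 : ∀ c0 : DCell (n + m),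
        0 ≤ (-1 : ℤ) ^ (dimD c + dimD d + dimD c0) *
          finsuppTensorFinsupp' ℤ (DCell n) (DCell m) (v (genD c0)) (c, d) := by
      intro c0
      rcases c0 with ⟨i, ε⟩ | u
      · rw [hcoeff i ε c d, dimD_inl]
        by_cases h1 : (iotaD n (dimD c) ε = c ∧ iotaD m (dimD d) (sflipN (dimD c) ε) = d)
            ∧ dimD c + dimD d = (i : ℕ)
        · have h2 : ¬((iotaD n (dimD c) ε = c ∧ iotaD m (dimD d) (!sflipN (dimD c) ε) = d
              ∧ dimD c < n ∧ dimD d < m) ∧ dimD c + dimD d + 1 = (i : ℕ)) := by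
            rintro ⟨-, h⟩
            omega
          rw [if_pos h1, if_neg h2, sub_zero]
          obtain ⟨-, h3⟩ := h1
          rw [← h3]
          have e : (-1:ℤ) ^ (dimD c + dimD d + (dimD c + dimD d)) = 1 := by
            rw [← two_mul, pow_mul]; norm_num
          rw [e]
          norm_num
        · rw [if_neg h1]
          by_cases h2 : (iotaD n (dimD c) ε = c ∧ iotaD m (dimD d) (!sflipN (dimD c) ε) = d
              ∧ dimD c < n ∧ dimD d < m) ∧ dimD c + dimD d + 1 = (i : ℕ)
          · rw [if_pos h2]
            obtain ⟨-, h3⟩ := h2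
            rw [← h3]
            have e : (-1:ℤ) ^ (dimD c + dimD d + (dimD c + dimD d + 1)) = -1 := by
              rw [show dimD c + dimD d + (dimD c + dimD d + 1)
                  = 2 * (dimD c + dimD d) + 1 by ring, pow_succ, pow_mul]
              norm_num
            rw [e]
            norm_num
          · rw [if_neg h2]
            norm_num
      · cases u
        rw [hvtop, finsuppTensorFinsupp'_apply_apply, genD_apply, genD_apply, dimD_inr]
        by_cases h1 : (Sum.inr () : DCell n) = c
        · by_cases h2 : (Sum.inr () : DCell m) = d
          · rw [if_pos h1, if_pos h2, ← h1, ← h2, dimD_inr, dimD_inr]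
            have e : (-1:ℤ) ^ (n + m + (n + m)) = 1 := by
              rw [← two_mul, pow_mul]; norm_num
            rw [e]; norm_num
          · rw [if_neg h2, mul_zero, mul_zero]
        · rw [if_neg h1, zero_mul, mul_zero]
    have hxdec : v x = ∑ c0 ∈ x.support, x c0 • v (genD c0) := by
      conv_lhs => rw [← Finsupp.sum_single x, Finsupp.sum, map_sum]
      refine Finset.sum_congr rfl fun c0 _ => ?_
      have e : Finsupp.single c0 (x c0) = x c0 • genD c0 := by
        rw [genD, Finsupp.smul_single', mul_one]
      rw [e, map_zsmul]
    rw [hxdec, map_sum, Finsupp.finset_sum_apply, Finset.mul_sum]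
    apply Finset.sum_nonneg
    intro c0 _
    rw [map_zsmul, Finsupp.smul_apply, smul_eq_mul]
    set w := finsuppTensorFinsupp' ℤ (DCell n) (DCell m) (v (genD c0)) (c, d) with hw
    have hsq : (-1:ℤ) ^ (dimD c0) * (-1:ℤ) ^ (dimD c0) = 1 := by
      rw [← pow_add, ← two_mul, pow_mul]; norm_num
    have key : (-1:ℤ) ^ (dimD c + dimD d) * (x c0 * w)
        = ((-1:ℤ) ^ (dimD c0) * x c0) * ((-1:ℤ) ^ (dimD c + dimD d + dimD c0) * w) := by
      rw [pow_add (-1:ℤ) (dimD c + dimD d) (dimD c0)]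
      linear_combination (-(x c0 * w * (-1:ℤ) ^ (dimD c + dimD d))) * hsq
    rw [key]
    exact mul_nonneg (hx c0) (hK1 c0)
end

section
/- Let G be an augmented strict ∞-group, i.e. a globular group G with a linear map e: G → ℤ satisfying e ∘ π_0^+ = e ∘ π_0^- = e. Define ΣG = G ⊕ ℤ with π_k^ε(g ⊕ z) = π_{k-1}^ε(g) ⊕ z for k ≥ 1, π_0^-(g ⊕ z) = 0 ⊕ z, and π_0^+(g ⊕ z) = 0 ⊕ (z + e(g)). Then ΣG is a globular group (hence a strict ∞-group) with (ΣG)_0 ≅ ℤ. -/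
/-- The suspension operations on `ΣG = G ⊕ ℤ` for an augmented strict ∞-group
`(G, e)`: `π_k^ε(g ⊕ z) = π_{k-1}^ε(g) ⊕ z` for `k ≥ 1`, `π_0^-(g ⊕ z) = 0 ⊕ z`,
`π_0^+(g ⊕ z) = 0 ⊕ (z + e g)` (and `0` for `k < 0`). -/
def suspPi {G : Type*} [AddCommGroup G] (π : Bool → ℤ → G →+ G) (e : G →+ ℤ)
    (ε : Bool) (k : ℤ) (x : G × ℤ) : G × ℤ :=
  if k < 0 then 0
  else if k = 0 then (0, if ε then x.2 + e x.1 else x.2)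
  else (π ε (k - 1) x.1, x.2)

/-- For an augmented strict ∞-group `(G, e)` (a globular group with an augmentation
`e : G → ℤ` satisfying `e ∘ π_0^± = e`), the suspension `ΣG = G ⊕ ℤ` with the
operations `suspPi` is again a globular group (hence a strict ∞-group), and its
group of `0`-arrows is the copy of `ℤ`. -/
theorem suspension_is_globular_group
    {G : Type*} [AddCommGroup G] (π : Bool → ℤ → G →+ G)
    (hneg : ∀ (ε : Bool) (k : ℤ), k < 0 → π ε k = 0)
    (hglob_lt : ∀ (ε δ : Bool) (i j : ℤ), i < j → ∀ x, π ε i (π δ j x) = π ε i x)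
    (hglob_le : ∀ (ε δ : Bool) (i j : ℤ), j ≤ i → ∀ x, π ε i (π δ j x) = π δ j x)
    (harrow : ∀ x : G, ∃ n : ℤ, π true n x = x)
    (e : G →+ ℤ)
    (he : ∀ (ε : Bool) (x : G), e (π ε 0 x) = e x) :
    -- the suspension operations are additive
    (∀ (ε : Bool) (k : ℤ) (x y : G × ℤ),
        suspPi π e ε k (x + y) = suspPi π e ε k x + suspPi π e ε k y) ∧
    -- they satisfy the globular relations
    (∀ (ε δ : Bool) (i j : ℤ), i < j →
        ∀ x, suspPi π e ε i (suspPi π e δ j x) = suspPi π e ε i x) ∧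
    (∀ (ε δ : Bool) (i j : ℤ), j ≤ i →
        ∀ x, suspPi π e ε i (suspPi π e δ j x) = suspPi π e δ j x) ∧
    -- every element is an arrow of some dimension
    (∀ x : G × ℤ, ∃ n : ℤ, suspPi π e true n x = x) ∧
    -- the 0-arrows of ΣG are exactly the elements of the copy of ℤ: (ΣG)_0 ≅ ℤ
    (∀ x : G × ℤ, suspPi π e true 0 x = x ↔ x.1 = 0) := by
  -- `e` is invariant under all `π δ m` for `m ≥ 0`
  have he' : ∀ (δ : Bool) (m : ℤ), 0 ≤ m → ∀ g : G, e (π δ m g) = e g := by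
    intro δ m hm g
    rcases eq_or_lt_of_le hm with h0 | h0
    · rw [← h0]; exact he δ g
    · have : e (π true 0 (π δ m g)) = e (π δ m g) := he true _
      rw [hglob_lt true δ 0 m h0 g, he true g] at this
      exact this.symm
  have hzero : ∀ (ε : Bool) (k : ℤ), suspPi π e ε k (0 : G × ℤ) = 0 := by
    intro ε k
    unfold suspPi
    split_ifs <;> simp [Prod.ext_iff]
  refine ⟨?_, ?_, ?_, ?_, ?_⟩
  · -- additivity
    intro ε k x y
    unfold suspPi
    split_ifs <;> simp [Prod.ext_iff, map_add] <;> ring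
  · -- globular, i < j
    intro ε δ i j hij x
    rcases lt_trichotomy i 0 with hi | hi | hi
    · simp [suspPi, hi]
    · subst hi
      have hj : ¬ j < 0 := by omega
      have hj0 : j ≠ 0 := by omega
      simp only [suspPi, if_neg hj, if_neg hj0, lt_irrefl, if_neg (lt_irrefl 0), if_pos rfl]
      rw [he' δ (j - 1) (by omega)]
      simp
    · have hi' : ¬ i < 0 := by omega
      have hi0 : i ≠ 0 := by omega
      have hj : ¬ j < 0 := by omega
      have hj0 : j ≠ 0 := by omega
      simp only [suspPi, if_neg hi', if_neg hi0, if_neg hj, if_neg hj0]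
      rw [hglob_lt ε δ (i - 1) (j - 1) (by omega)]
  · -- globular, j ≤ i
    intro ε δ i j hij x
    rcases lt_trichotomy j 0 with hj | hj | hj
    · rw [show suspPi π e δ j x = 0 by simp [suspPi, hj], hzero]
    · subst hj
      have hi : ¬ i < 0 := by omega
      rcases eq_or_lt_of_le hij with hi0 | hi0
      · subst hi0
        simp only [suspPi, lt_irrefl, if_neg (lt_irrefl 0), if_pos rfl]
        cases ε <;> simp
      · have hi0' : i ≠ 0 := by omega
        simp only [suspPi, if_neg hi, if_neg hi0', lt_irrefl, if_neg (lt_irrefl 0), if_pos rfl]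
        simp
    · have hi : ¬ i < 0 := by omega
      have hi0 : i ≠ 0 := by omega
      have hj' : ¬ j < 0 := by omega
      have hj0 : j ≠ 0 := by omega
      simp only [suspPi, if_neg hi, if_neg hi0, if_neg hj', if_neg hj0]
      rw [hglob_le ε δ (i - 1) (j - 1) (by omega)]
  · -- every element is an arrow
    intro x
    obtain ⟨n, hn⟩ := harrow x.1
    rcases lt_or_ge n 0 with hn0 | hn0
    · refine ⟨1, ?_⟩
      have hx1 : x.1 = 0 := by rw [← hn, hneg true n hn0]; rfl
      simp [suspPi, hx1, Prod.ext_iff]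
    · refine ⟨n + 1, ?_⟩
      have h1 : ¬ n + 1 < 0 := by omega
      have h2 : n + 1 ≠ 0 := by omega
      simp only [suspPi, if_neg h1, if_neg h2, add_sub_cancel_right, hn]
  · -- 0-arrows
    intro x
    constructor
    · intro h
      have := congrArg Prod.fst h
      simpa [suspPi] using this.symm
    · intro h
      simp [suspPi, Prod.ext_iff, h]
end
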